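/- arXiv:1404.4344 — 7 statements merged into one kernel-verified Lean document; each statement's English description precedes it below -/
import Mathlib

section
/- Let A be a good s-balancer on the balancing graph G⁺ of a finite connected d-regular graph G, and let c ∈ ℕ. Then for every t ≥ 2, φ_t(c) ≤ φ_{t−1}(c) − Σ_{u∈V} Δ_t(c,u), where Δ_t(c,u) = min{x_{t−1}(u), c·d⁺ + s} − max{x_t(u), c·d⁺} if x_{t−1}(u) > x_t(u), x_{t−1}(u) > c·d⁺ and x_t(u) < c·d⁺ + s, and Δ_t(c,u) = 0 otherwise. In particular, the potential φ_t(c) is non-increasing in t. -/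
/-! Measure the excess over `c` of every edge flow, `max {f(e) − c, 0}`. Round fairness puts all
flows leaving a node into `{⌊x/d⁺⌋, ⌈x/d⁺⌉}`, so either all of them are at least `c` or none exceeds
it, and the excesses of the outgoing edges sum exactly to `max {x_t(u) − c·d⁺, 0}`; by convexity the
excesses of the incoming edges dominate `max {x_{t+1}(u) − c·d⁺, 0}`. Since every edge is outgoing
for one node and incoming for another, this gives `φ_{t+1}(c) ≤ φ_t(c)`. The gain `Δ` comes
from the self-loops, whose tokens stay at the node: by `s`-self-preference they carry at least
`min {x_t(u) − c·d⁺, s}` excess tokens, which equals `max {x_{t+1}(u) − c·d⁺, 0} + Δ` whenever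
`Δ ≠ 0`. -/

open Finset

/-- A `d`-regular connected symmetric graph `G` together with `dSelf` self-loops
attached to every node (the balancing graph `G⁺`). -/
structure LBSetup (V : Type) [Fintype V] [DecidableEq V] where
  d : ℕ
  dSelf : ℕ
  Adj : V → V → Bool
  symm : ∀ u v : V, Adj u v → Adj v u
  loopless : ∀ u : V, ¬ Adj u u
  regular : ∀ u : V, (Finset.univ.filter fun v => Adj u v).card = d
  connected : ∀ u v : V, Relation.ReflTransGen (fun a b => Adj a b = true) u v

variable {V : Type} [Fintype V] [DecidableEq V]

/-- Degree `d⁺ = d + d°` of the balancing graph. -/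
def LBSetup.dPlus (S : LBSetup V) : ℕ := S.d + S.dSelf

/-- Neighbours of `u` in the original graph. -/
def LBSetup.nbrs (S : LBSetup V) (u : V) : Finset V :=
  Finset.univ.filter fun v => S.Adj u v

/-- A load-balancing algorithm on the balancing graph `G⁺`: integer flows on
original edges (`f`) and on self-loops (`g`), and load vectors `x`, satisfying
the conservation laws. Time steps start at `t = 1`. -/
structure LBAlgo (S : LBSetup V) where
  f : ℕ → V → V → ℕ
  g : ℕ → V → Fin S.dSelf → ℕ
  x : ℕ → V → ℕ
  flow_out : ∀ t, 1 ≤ t → ∀ u : V,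
    x t u = (∑ v ∈ S.nbrs u, f t u v) + ∑ i : Fin S.dSelf, g t u i
  flow_in : ∀ t, 1 ≤ t → ∀ u : V,
    x (t + 1) u = (∑ v ∈ S.nbrs u, f t v u) + ∑ i : Fin S.dSelf, g t u i

/-- Cumulative flow on the original edge `(u, v)` up to time `t`. -/
def LBAlgo.F {S : LBSetup V} (A : LBAlgo S) (t : ℕ) (u v : V) : ℕ :=
  ∑ τ ∈ Finset.Icc 1 t, A.f τ u v

/-- Cumulative flow on the `i`-th self-loop of `u` up to time `t`. -/
def LBAlgo.Gcum {S : LBSetup V} (A : LBAlgo S) (t : ℕ) (u : V) (i : Fin S.dSelf) : ℕ :=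
  ∑ τ ∈ Finset.Icc 1 t, A.g τ u i

/-- Cumulative δ-fairness: every edge (original or self-loop) of `u` carries at least
`⌊x_t(u)/d⁺⌋` tokens in every step, and cumulative flows on any two original edges
of `u` differ by at most `δ`. -/
def CumFair (S : LBSetup V) (A : LBAlgo S) (δ : ℝ) : Prop :=
  (∀ t, 1 ≤ t → ∀ u : V,
      (∀ v : V, S.Adj u v → A.x t u / S.dPlus ≤ A.f t u v) ∧
      (∀ i : Fin S.dSelf, A.x t u / S.dPlus ≤ A.g t u i)) ∧
  (∀ t : ℕ, ∀ u v w : V, S.Adj u v → S.Adj u w →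
      |(A.F t u v : ℝ) - (A.F t u w : ℝ)| ≤ δ)

/-- Maximum load at time `t`. -/
def maxLoad {S : LBSetup V} [Nonempty V] (A : LBAlgo S) (t : ℕ) : ℕ :=
  Finset.univ.sup' Finset.univ_nonempty (A.x t)

/-- Minimum load at time `t`. -/
def minLoad {S : LBSetup V} [Nonempty V] (A : LBAlgo S) (t : ℕ) : ℕ :=
  Finset.univ.inf' Finset.univ_nonempty (A.x t)

/-- Discrepancy at time `t`. -/
def disc {S : LBSetup V} [Nonempty V] (A : LBAlgo S) (t : ℕ) : ℕ :=
  maxLoad A t - minLoad A t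

/-- Transition matrix `P` of the balancing graph `G⁺`. -/
noncomputable def LBSetup.P (S : LBSetup V) : Matrix V V ℝ :=
  Matrix.of fun u v =>
    if S.Adj u v then (1 : ℝ) / S.dPlus
    else if u = v then (S.dSelf : ℝ) / S.dPlus else 0

/-- `μ` is the eigenvalue gap of `P`: `μ = 1 - λ₂` where `λ₂` is the
largest eigenvalue of `P` different from `1`. -/
def LBSetup.IsEigGap (S : LBSetup V) (μ : ℝ) : Prop :=
  ∃ lam : ℝ, μ = 1 - lam ∧ lam ∈ spectrum ℝ S.P ∧ lam ≠ 1 ∧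
    ∀ x ∈ spectrum ℝ S.P, x ≠ 1 → x ≤ lam

/-- Ceiling division `⌈a / b⌉` on naturals. -/
def cdiv (a b : ℕ) : ℕ := (a + b - 1) / b

/-- A good `s`-balancer: a cumulatively 1-fair balancer which is round-fair (every edge,
including self-loops, carries `⌊x_t(u)/d⁺⌋` or `⌈x_t(u)/d⁺⌉` tokens) and `s`-self-preferring
(at least `min{s, e(u)}` self-loops carry `⌈x_t(u)/d⁺⌉` tokens, where
`e(u) = x_t(u) - d⁺·⌊x_t(u)/d⁺⌋`). -/
def GoodSBalancer (S : LBSetup V) (A : LBAlgo S) (s : ℕ) : Prop :=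
  CumFair S A 1 ∧
  ∀ t, 1 ≤ t → ∀ u : V,
    (∀ v : V, S.Adj u v →
        A.f t u v = A.x t u / S.dPlus ∨ A.f t u v = cdiv (A.x t u) S.dPlus) ∧
    (∀ i : Fin S.dSelf,
        A.g t u i = A.x t u / S.dPlus ∨ A.g t u i = cdiv (A.x t u) S.dPlus) ∧
    min s (A.x t u % S.dPlus) ≤
      (Finset.univ.filter fun i : Fin S.dSelf =>
        A.g t u i = cdiv (A.x t u) S.dPlus).card

/-- The potential `φ_t(c) = Σ_v max{x_t(v) − c·d⁺, 0}`. -/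
def phi {S : LBSetup V} (A : LBAlgo S) (t : ℕ) (c : ℕ) : ℤ :=
  ∑ v : V, max ((A.x t v : ℤ) - (c : ℤ) * S.dPlus) 0

/-- The potential `φ'_t(c) = Σ_v max{c·d⁺ + s − x_t(v), 0}`. -/
def phi' {S : LBSetup V} (A : LBAlgo S) (s : ℕ) (t : ℕ) (c : ℕ) : ℤ :=
  ∑ v : V, max ((c : ℤ) * S.dPlus + (s : ℤ) - (A.x t v : ℤ)) 0

/-- One-step potential drop `Δ_t(c,u)` (here the step leading from time `t` to `t+1`). -/
def Delta {S : LBSetup V} (A : LBAlgo S) (s : ℕ) (t : ℕ) (c : ℕ) (u : V) : ℤ :=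
  if A.x (t + 1) u < A.x t u ∧ (c : ℤ) * S.dPlus < (A.x t u : ℤ) ∧
      (A.x (t + 1) u : ℤ) < (c : ℤ) * S.dPlus + s then
    min (A.x t u : ℤ) ((c : ℤ) * S.dPlus + s) -
      max (A.x (t + 1) u : ℤ) ((c : ℤ) * S.dPlus)
  else 0

lemma div_le_cdiv (a b : ℕ) : a / b ≤ cdiv a b := by
  rcases Nat.eq_zero_or_pos b with rfl | hb
  · simp [cdiv]
  · exact Nat.div_le_div_right (by omega)

lemma cdiv_le_div_add_one (a b : ℕ) : cdiv a b ≤ a / b + 1 := by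
  rcases Nat.eq_zero_or_pos b with rfl | hb
  · simp [cdiv]
  · calc cdiv a b ≤ (a + b) / b := Nat.div_le_div_right (by omega)
      _ = a / b + 1 := Nat.add_div_right a hb

lemma cdiv_eq_div_add_one {a b : ℕ} (hb : 0 < b) (h : a % b ≠ 0) : cdiv a b = a / b + 1 := by
  have hdecomp : a + b - 1 = (a % b - 1) + b * (a / b + 1) := by
    have := Nat.div_add_mod a b
    rw [Nat.mul_add_one]
    omega
  have hsmall : (a % b - 1) / b = 0 := Nat.div_eq_of_lt (by have := Nat.mod_lt a hb; omega)
  rw [cdiv, hdecomp, Nat.add_mul_div_left _ _ hb, hsmall, zero_add]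

theorem Finset.card_filter_lt_le_sum_max_sub {ι : Type*} (s : Finset ι) (a : ι → ℕ) (c : ℕ) :
    ((s.filter fun i => c < a i).card : ℤ) ≤ ∑ i ∈ s, max ((a i : ℤ) - c) 0 := by
  rw [Finset.card_filter, Nat.cast_sum]
  refine Finset.sum_le_sum fun i _ => ?_
  split_ifs with h
  · exact le_max_of_le_left (by push_cast; omega)
  · simp

namespace LBAlgo

variable {S : LBSetup V} (A : LBAlgo S)

def loopExcess (t c : ℕ) (u : V) : ℤ :=
  ∑ i : Fin S.dSelf, max ((A.g t u i : ℤ) - c) 0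

def outExcess (t c : ℕ) (u : V) : ℤ :=
  (∑ v ∈ S.nbrs u, max ((A.f t u v : ℤ) - c) 0) + A.loopExcess t c u

def inExcess (t c : ℕ) (u : V) : ℤ :=
  (∑ v ∈ S.nbrs u, max ((A.f t v u : ℤ) - c) 0) + A.loopExcess t c u

lemma load_sub_eq {t : ℕ} (ht : 1 ≤ t) (c : ℕ) (u : V) :
    (A.x t u : ℤ) - c * S.dPlus =
      (∑ v ∈ S.nbrs u, ((A.f t u v : ℤ) - c)) + ∑ i : Fin S.dSelf, ((A.g t u i : ℤ) - c) := by
  simp only [Finset.sum_sub_distrib, Finset.sum_const, LBSetup.nbrs, S.regular, Finset.card_univ,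
    Fintype.card_fin, nsmul_eq_mul, A.flow_out t ht u, LBSetup.dPlus]
  push_cast
  ring

lemma load_succ_sub_eq {t : ℕ} (ht : 1 ≤ t) (c : ℕ) (u : V) :
    (A.x (t + 1) u : ℤ) - c * S.dPlus =
      (∑ v ∈ S.nbrs u, ((A.f t v u : ℤ) - c)) + ∑ i : Fin S.dSelf, ((A.g t u i : ℤ) - c) := by
  simp only [Finset.sum_sub_distrib, Finset.sum_const, LBSetup.nbrs, S.regular, Finset.card_univ,
    Fintype.card_fin, nsmul_eq_mul, A.flow_in t ht u, LBSetup.dPlus]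
  push_cast
  ring

lemma inExcess_nonneg (t c : ℕ) (u : V) : 0 ≤ A.inExcess t c u :=
  add_nonneg (Finset.sum_nonneg fun _ _ => le_max_right _ _)
    (Finset.sum_nonneg fun _ _ => le_max_right _ _)

lemma load_succ_sub_le_inExcess {t : ℕ} (ht : 1 ≤ t) (c : ℕ) (u : V) :
    (A.x (t + 1) u : ℤ) - c * S.dPlus ≤ A.inExcess t c u := by
  rw [load_succ_sub_eq A ht, inExcess, loopExcess]
  exact add_le_add (Finset.sum_le_sum fun _ _ => le_max_left _ _)
    (Finset.sum_le_sum fun _ _ => le_max_left _ _)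

lemma sum_inExcess_eq_sum_outExcess (t c : ℕ) :
    ∑ u : V, A.inExcess t c u = ∑ u : V, A.outExcess t c u := by
  simp only [inExcess, outExcess, Finset.sum_add_distrib, add_left_inj]
  refine Finset.sum_comm' fun u v => ?_
  simp only [LBSetup.nbrs, Finset.mem_filter, Finset.mem_univ, true_and, and_true]
  exact ⟨S.symm u v, S.symm v u⟩

end LBAlgo

namespace GoodSBalancer

variable {S : LBSetup V} {A : LBAlgo S} {s : ℕ}

lemma flow_bounds (hA : GoodSBalancer S A s) {t : ℕ} (ht : 1 ≤ t) (u : V) :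
    (∀ v ∈ S.nbrs u, A.x t u / S.dPlus ≤ A.f t u v ∧ A.f t u v ≤ A.x t u / S.dPlus + 1) ∧
      ∀ i, A.x t u / S.dPlus ≤ A.g t u i ∧ A.g t u i ≤ A.x t u / S.dPlus + 1 := by
  have hround : ∀ a, a = A.x t u / S.dPlus ∨ a = cdiv (A.x t u) S.dPlus →
      A.x t u / S.dPlus ≤ a ∧ a ≤ A.x t u / S.dPlus + 1 := by
    rintro a (rfl | rfl)
    · omega
    · exact ⟨div_le_cdiv _ _, cdiv_le_div_add_one _ _⟩
  obtain ⟨hf, hg, -⟩ := hA.2 t ht u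
  refine ⟨fun v hv => hround _ (hf v ?_), fun i => hround _ (hg i)⟩
  simpa [LBSetup.nbrs] using hv

lemma outExcess_le (hA : GoodSBalancer S A s) {t : ℕ} (ht : 1 ≤ t) (c : ℕ) (u : V) :
    A.outExcess t c u ≤ max ((A.x t u : ℤ) - c * S.dPlus) 0 := by
  obtain ⟨hf, hg⟩ := hA.flow_bounds ht u
  by_cases hc : c ≤ A.x t u / S.dPlus
  · refine le_max_of_le_left (le_of_eq ?_)
    rw [A.load_sub_eq ht, LBAlgo.outExcess, LBAlgo.loopExcess]
    congr 1
    · exact Finset.sum_congr rfl fun v hv => max_eq_left (by have := (hf v hv).1; omega)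
    · exact Finset.sum_congr rfl fun i _ => max_eq_left (by have := (hg i).1; omega)
  · refine le_max_of_le_right (le_of_eq ?_)
    rw [LBAlgo.outExcess, LBAlgo.loopExcess,
      Finset.sum_eq_zero fun v hv => max_eq_right (by have := (hf v hv).2; omega),
      Finset.sum_eq_zero fun i _ => max_eq_right (by have := (hg i).2; omega), add_zero]

/-- If `c < q` every self-loop carries more than `c` tokens; if `c = q`, the `min {s, e(u)}`
self-loops carrying `q + 1 = ⌈x_t(u)/d⁺⌉` tokens do. -/
lemma min_sub_le_loopExcess (hA : GoodSBalancer S A s) (hs1 : 1 ≤ s) (hs2 : s ≤ S.dSelf) {t : ℕ}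
    (ht : 1 ≤ t) {c : ℕ} {u : V} (hc : (c : ℤ) * S.dPlus < A.x t u) :
    min ((A.x t u : ℤ) - c * S.dPlus) s ≤ A.loopExcess t c u := by
  have hgq : ∀ i, A.x t u / S.dPlus ≤ A.g t u i := fun i => ((hA.flow_bounds ht u).2 i).1
  set x := A.x t u
  set q := x / S.dPlus
  have hD : 0 < S.dPlus := by unfold LBSetup.dPlus; omega
  have hcx : c * S.dPlus < x := by exact_mod_cast hc
  have hcq : c ≤ q := (Nat.le_div_iff_mul_le hD).2 hcx.le
  refine le_trans ?_ (Finset.card_filter_lt_le_sum_max_sub _ _ _)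
  rcases hcq.lt_or_eq with hlt | rfl
  · have hall : (Finset.univ.filter fun i : Fin S.dSelf => c < A.g t u i) = Finset.univ :=
      Finset.filter_true_of_mem fun i _ => by have := hgq i; omega
    rw [hall, Finset.card_univ, Fintype.card_fin]
    exact min_le_of_right_le (by exact_mod_cast hs2)
  · have hmod : x % S.dPlus = x - q * S.dPlus := Nat.mod_eq_sub_div_mul
    have hceil : cdiv x S.dPlus = q + 1 := cdiv_eq_div_add_one hD (by omega)
    have hcount := (hA.2 t ht u).2.2
    rw [hceil, hmod] at hcount
    have hsub : (Finset.univ.filter fun i : Fin S.dSelf => A.g t u i = q + 1) ⊆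
        Finset.univ.filter fun i => q < A.g t u i :=
      Finset.monotone_filter_right _ fun i h => by omega
    have := hcount.trans (Finset.card_le_card hsub)
    rw [min_comm]
    have hcast : ((x - q * S.dPlus : ℕ) : ℤ) = (x : ℤ) - q * S.dPlus := by
      push_cast [hcx.le]; ring
    rw [← hcast]
    exact_mod_cast this

end GoodSBalancer

lemma Delta_nonneg {S : LBSetup V} (A : LBAlgo S) (s t c : ℕ) (u : V) : 0 ≤ Delta A s t c u := by
  unfold Delta
  split_ifs
  · omega
  · exact le_rfl

lemma GoodSBalancer.max_sub_add_Delta_le_inExcess {S : LBSetup V} {A : LBAlgo S} {s : ℕ}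
    (hA : GoodSBalancer S A s) (hs1 : 1 ≤ s) (hs2 : s ≤ S.dSelf) {t : ℕ} (ht : 1 ≤ t) (c : ℕ)
    (u : V) :
    max ((A.x (t + 1) u : ℤ) - c * S.dPlus) 0 + Delta A s t c u ≤ A.inExcess t c u := by
  unfold Delta
  split_ifs with h
  · obtain ⟨-, hc, hlt⟩ := h
    have hnbr : 0 ≤ ∑ v ∈ S.nbrs u, max ((A.f t v u : ℤ) - c) 0 :=
      Finset.sum_nonneg fun _ _ => le_max_right _ _
    calc max ((A.x (t + 1) u : ℤ) - c * S.dPlus) 0 +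
          (min (A.x t u : ℤ) (c * S.dPlus + s) - max (A.x (t + 1) u : ℤ) (c * S.dPlus))
        = min ((A.x t u : ℤ) - c * S.dPlus) s := by omega
      _ ≤ A.loopExcess t c u := hA.min_sub_le_loopExcess hs1 hs2 ht hc
      _ ≤ A.inExcess t c u := le_add_of_nonneg_left hnbr
  · rw [add_zero]
    exact max_le (A.load_succ_sub_le_inExcess ht c u) (A.inExcess_nonneg t c u)

/-- **Lemma 2 (monotonicity of the potential `φ`).** For a good `s`-balancer, for every
time step `t ≥ 1` and every `c ∈ ℕ`, `φ_{t+1}(c) ≤ φ_t(c) − Σ_u Δ_{t+1}(c,u)`;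
in particular `φ` is non-increasing in time. -/
theorem phi_potential_drop (S : LBSetup V) (A : LBAlgo S) (s : ℕ)
    (hs1 : 1 ≤ s) (hs2 : s ≤ S.dSelf) (hA : GoodSBalancer S A s) (c : ℕ) :
    ∀ t, 1 ≤ t →
      phi A (t + 1) c ≤ phi A t c - ∑ u : V, Delta A s t c u ∧
      phi A (t + 1) c ≤ phi A t c := by
  intro t ht
  have hdrop : phi A (t + 1) c + ∑ u : V, Delta A s t c u ≤ phi A t c :=
    calc phi A (t + 1) c + ∑ u : V, Delta A s t c u
        = ∑ u : V, (max ((A.x (t + 1) u : ℤ) - c * S.dPlus) 0 + Delta A s t c u) := by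
          rw [phi, Finset.sum_add_distrib]
      _ ≤ ∑ u : V, A.inExcess t c u :=
          Finset.sum_le_sum fun u _ => hA.max_sub_add_Delta_le_inExcess hs1 hs2 ht c u
      _ = ∑ u : V, A.outExcess t c u := A.sum_inExcess_eq_sum_outExcess t c
      _ ≤ phi A t c := Finset.sum_le_sum fun u _ => hA.outExcess_le ht c u
  have hDelta : 0 ≤ ∑ u : V, Delta A s t c u :=
    Finset.sum_nonneg fun u _ => Delta_nonneg A s t c u
  exact ⟨by linarith, by linarith⟩
end

section
/- Let A be a good s-balancer on the balancing graph G⁺ of a finite connected d-regular graph G, let c ∈ ℕ, and let t ≤ t' be two time steps. Let U ⊆ V be a set of nodes such that every u ∈ U satisfies x_t(u) ≥ c·d⁺ + 1 and there exists a time step t_u ∈ [t, t'] with x_{t_u}(u) ≤ c·d⁺. Then φ_{t'}(c) ≤ φ_t(c) − Σ_{u∈U} min{s, x_t(u) − c·d⁺}. -/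
open Finset

variable {V : Type} [Fintype V] [DecidableEq V]

namespace PhiFastDropAux

lemma cdiv_le' {a b c : ℕ} (hb : 0 < b) (h : a ≤ c * b) : cdiv a b ≤ c := by
  unfold cdiv
  apply Nat.le_of_lt_succ
  have h2 : a + b - 1 < (c + 1) * b := by
    have h3 : (c + 1) * b = c * b + b := by ring
    omega
  exact (Nat.div_lt_iff_lt_mul hb).2 h2

lemma div_le_cdiv {a b : ℕ} (hb : 0 < b) : a / b ≤ cdiv a b :=
  Nat.div_le_div_right (by omega)

lemma cdiv_eq_succ {a b : ℕ} (hb : 0 < b) (h : a % b ≠ 0) : cdiv a b = a / b + 1 := by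
  have hdm := Nat.div_add_mod a b
  have hlt : a % b < b := Nat.mod_lt _ hb
  unfold cdiv
  have h3 : b * (a / b + 1) = b * (a / b) + b := by ring
  have he : a + b - 1 = b * (a / b + 1) + (a % b - 1) := by rw [h3]; omega
  rw [he, Nat.mul_add_div hb, Nat.div_eq_of_lt (show a % b - 1 < b by omega)]

variable {V : Type} [Fintype V] [DecidableEq V] {S : LBSetup V}

/-- The potential drop charged to node `u` at step `σ`. -/
def Dfun (A : LBAlgo S) (c σ : ℕ) (u : V) : ℤ :=
  (∑ v ∈ S.nbrs u, max ((A.f σ v u : ℤ) - c) 0)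
  + (∑ i : Fin S.dSelf, max ((A.g σ u i : ℤ) - c) 0)
  - max ((A.x (σ + 1) u : ℤ) - (c : ℤ) * S.dPlus) 0

lemma card_nbrs (u : V) : (S.nbrs u).card = S.d := S.regular u

lemma sum_sub_card {α : Type*} (s : Finset α) (f : α → ℤ) (c : ℤ) :
    ∑ a ∈ s, (f a - c) = (∑ a ∈ s, f a) - s.card * c := by
  rw [Finset.sum_sub_distrib, Finset.sum_const, nsmul_eq_mul]

lemma dPlus_pos {s : ℕ} (hs1 : 1 ≤ s) (hs2 : s ≤ S.dSelf) : 0 < S.dPlus := by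
  unfold LBSetup.dPlus; omega

lemma D_nonneg (A : LBAlgo S) (c σ : ℕ) (hσ : 1 ≤ σ) (u : V) :
    0 ≤ Dfun A c σ u := by
  have hin := A.flow_in σ hσ u
  unfold Dfun
  rw [sub_nonneg]
  apply max_le
  · have h1 : (∑ v ∈ S.nbrs u, ((A.f σ v u : ℤ) - c)) ≤
        ∑ v ∈ S.nbrs u, max ((A.f σ v u : ℤ) - c) 0 :=
      Finset.sum_le_sum fun v _ => le_max_left _ _
    have h2 : (∑ i : Fin S.dSelf, ((A.g σ u i : ℤ) - c)) ≤
        ∑ i : Fin S.dSelf, max ((A.g σ u i : ℤ) - c) 0 :=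
      Finset.sum_le_sum fun i _ => le_max_left _ _
    rw [sum_sub_card, card_nbrs] at h1
    rw [sum_sub_card] at h2
    simp only [Finset.card_univ, Fintype.card_fin] at h2
    have hx : (A.x (σ + 1) u : ℤ) =
        (∑ v ∈ S.nbrs u, (A.f σ v u : ℤ)) + ∑ i : Fin S.dSelf, (A.g σ u i : ℤ) := by
      rw [hin]; push_cast; ring
    have hdp : ((S.dPlus : ℕ) : ℤ) = (S.d : ℤ) + (S.dSelf : ℤ) := by
      unfold LBSetup.dPlus; push_cast; ring
    rw [hx, hdp]
    linarith
  · have h1 : (0 : ℤ) ≤ ∑ v ∈ S.nbrs u, max ((A.f σ v u : ℤ) - c) 0 :=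
      Finset.sum_nonneg fun v _ => le_max_right _ _
    have h2 : (0 : ℤ) ≤ ∑ i : Fin S.dSelf, max ((A.g σ u i : ℤ) - c) 0 :=
      Finset.sum_nonneg fun i _ => le_max_right _ _
    linarith

lemma out_bound (A : LBAlgo S) {s : ℕ} (hs1 : 1 ≤ s) (hs2 : s ≤ S.dSelf)
    (hA : GoodSBalancer S A s) (c σ : ℕ) (hσ : 1 ≤ σ) (u : V) :
    (∑ v ∈ S.nbrs u, max ((A.f σ u v : ℤ) - c) 0)
    + (∑ i : Fin S.dSelf, max ((A.g σ u i : ℤ) - c) 0)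
    ≤ max ((A.x σ u : ℤ) - (c : ℤ) * S.dPlus) 0 := by
  have hd : 0 < S.dPlus := dPlus_pos hs1 hs2
  obtain ⟨hf, hg, -⟩ := hA.2 σ hσ u
  by_cases hx : A.x σ u ≤ c * S.dPlus
  · -- every flow is at most c, so LHS is 0
    have hfloor : A.x σ u / S.dPlus ≤ c := by
      calc A.x σ u / S.dPlus ≤ c * S.dPlus / S.dPlus := Nat.div_le_div_right hx
        _ = c := Nat.mul_div_cancel c hd
    have hcd : cdiv (A.x σ u) S.dPlus ≤ c := cdiv_le' hd hx
    have h1 : ∑ v ∈ S.nbrs u, max ((A.f σ u v : ℤ) - c) 0 = 0 := by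
      apply Finset.sum_eq_zero
      intro v hv
      have hadj : S.Adj u v := by
        simpa [LBSetup.nbrs] using hv
      have : A.f σ u v ≤ c := by
        rcases hf v hadj with h | h <;> omega
      have h' : (A.f σ u v : ℤ) ≤ c := by exact_mod_cast this
      exact max_eq_right (by linarith)
    have h2 : ∑ i : Fin S.dSelf, max ((A.g σ u i : ℤ) - c) 0 = 0 := by
      apply Finset.sum_eq_zero
      intro i _
      have : A.g σ u i ≤ c := by
        rcases hg i with h | h <;> omega
      have h' : (A.g σ u i : ℤ) ≤ c := by exact_mod_cast this
      exact max_eq_right (by linarith)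
    rw [h1, h2]
    simp [le_max_right]
  · -- every flow is at least c
    push_neg at hx
    have hout := A.flow_out σ hσ u
    have hfloor : c ≤ A.x σ u / S.dPlus :=
      (Nat.le_div_iff_mul_le hd).2 (le_of_lt hx)
    have hfair := hA.1.1 σ hσ u
    have h1 : ∑ v ∈ S.nbrs u, max ((A.f σ u v : ℤ) - c) 0
        = ∑ v ∈ S.nbrs u, ((A.f σ u v : ℤ) - c) := by
      apply Finset.sum_congr rfl
      intro v hv
      have hadj : S.Adj u v := by simpa [LBSetup.nbrs] using hv
      have hle : (c : ℤ) ≤ A.f σ u v := by exact_mod_cast le_trans hfloor (hfair.1 v hadj)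
      exact max_eq_left (by linarith)
    have h2 : ∑ i : Fin S.dSelf, max ((A.g σ u i : ℤ) - c) 0
        = ∑ i : Fin S.dSelf, ((A.g σ u i : ℤ) - c) := by
      apply Finset.sum_congr rfl
      intro i _
      have hle : (c : ℤ) ≤ A.g σ u i := by exact_mod_cast le_trans hfloor (hfair.2 i)
      exact max_eq_left (by linarith)
    rw [h1, h2, sum_sub_card, sum_sub_card, card_nbrs]
    simp only [Finset.card_univ, Fintype.card_fin]
    have hxs : (A.x σ u : ℤ) =
        (∑ v ∈ S.nbrs u, (A.f σ u v : ℤ)) + ∑ i : Fin S.dSelf, (A.g σ u i : ℤ) := by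
      rw [hout]; push_cast; ring
    have hdp : ((S.dPlus : ℕ) : ℤ) = (S.d : ℤ) + (S.dSelf : ℤ) := by
      unfold LBSetup.dPlus; push_cast; ring
    have hmax : max ((A.x σ u : ℤ) - (c : ℤ) * S.dPlus) 0
        = (A.x σ u : ℤ) - (c : ℤ) * S.dPlus := by
      apply max_eq_left
      have : (c * S.dPlus : ℕ) < A.x σ u := hx
      have : ((c * S.dPlus : ℕ) : ℤ) ≤ (A.x σ u : ℤ) := by exact_mod_cast le_of_lt this
      push_cast at this
      linarith
    rw [hmax, hxs, hdp]
    ring_nf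
    linarith

lemma self_bound (A : LBAlgo S) {s : ℕ} (hs1 : 1 ≤ s) (hs2 : s ≤ S.dSelf)
    (hA : GoodSBalancer S A s) (c σ : ℕ) (hσ : 1 ≤ σ) (u : V)
    (hx : c * S.dPlus + 1 ≤ A.x σ u) :
    min (s : ℤ) ((A.x σ u : ℤ) - (c : ℤ) * S.dPlus) ≤
      ∑ i : Fin S.dSelf, max ((A.g σ u i : ℤ) - c) 0 := by
  have hd : 0 < S.dPlus := dPlus_pos hs1 hs2
  have hfloor : c ≤ A.x σ u / S.dPlus :=
    (Nat.le_div_iff_mul_le hd).2 (by omega)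
  have hgq : ∀ i, A.x σ u / S.dPlus ≤ A.g σ u i := (hA.1.1 σ hσ u).2
  rcases Nat.lt_or_ge c (A.x σ u / S.dPlus) with hq | hq
  · -- floor ≥ c + 1 : all self-loops carry ≥ c + 1
    have hone : ∀ i : Fin S.dSelf, (1 : ℤ) ≤ max ((A.g σ u i : ℤ) - c) 0 := by
      intro i
      have : c + 1 ≤ A.g σ u i := le_trans hq (hgq i)
      have : (c : ℤ) + 1 ≤ (A.g σ u i : ℤ) := by exact_mod_cast this
      exact le_max_of_le_left (by linarith)
    have hsum : (S.dSelf : ℤ) ≤ ∑ i : Fin S.dSelf, max ((A.g σ u i : ℤ) - c) 0 := by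
      have := Finset.sum_le_sum (s := (Finset.univ : Finset (Fin S.dSelf)))
        (fun i _ => hone i)
      simpa using this
    have : min (s : ℤ) ((A.x σ u : ℤ) - (c : ℤ) * S.dPlus) ≤ (s : ℤ) := min_le_left _ _
    have hss : (s : ℤ) ≤ (S.dSelf : ℤ) := by exact_mod_cast hs2
    linarith
  · -- floor = c
    have hqc : A.x σ u / S.dPlus = c := le_antisymm hq hfloor
    have key : c * S.dPlus + A.x σ u % S.dPlus = A.x σ u := by
      have h5 := Nat.div_add_mod (A.x σ u) S.dPlus
      rw [hqc, Nat.mul_comm] at h5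
      exact h5
    have hmod : A.x σ u % S.dPlus ≠ 0 := by omega
    have hcdiv : cdiv (A.x σ u) S.dPlus = c + 1 := by
      rw [cdiv_eq_succ hd hmod, hqc]
    obtain ⟨-, -, hcard⟩ := hA.2 σ hσ u
    set F : Finset (Fin S.dSelf) :=
      Finset.univ.filter fun i => A.g σ u i = cdiv (A.x σ u) S.dPlus with hF
    have h1 : (F.card : ℤ) ≤ ∑ i : Fin S.dSelf, max ((A.g σ u i : ℤ) - c) 0 := by
      calc (F.card : ℤ) = ∑ _i ∈ F, (1 : ℤ) := by simp
        _ ≤ ∑ i ∈ F, max ((A.g σ u i : ℤ) - c) 0 := by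
            apply Finset.sum_le_sum
            intro i hi
            have hgi : A.g σ u i = cdiv (A.x σ u) S.dPlus := (Finset.mem_filter.1 hi).2
            rw [hgi, hcdiv]
            apply le_max_of_le_left
            push_cast
            linarith
        _ ≤ ∑ i : Fin S.dSelf, max ((A.g σ u i : ℤ) - c) 0 :=
            Finset.sum_le_sum_of_subset_of_nonneg (Finset.subset_univ F)
              (fun i _ _ => le_max_right _ _)
    have keyZ : (c : ℤ) * S.dPlus + ((A.x σ u % S.dPlus : ℕ) : ℤ) = (A.x σ u : ℤ) := by
      exact_mod_cast key
    have hmz : ((A.x σ u % S.dPlus : ℕ) : ℤ) = (A.x σ u : ℤ) - (c : ℤ) * S.dPlus := by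
      linarith
    calc min (s : ℤ) ((A.x σ u : ℤ) - (c : ℤ) * S.dPlus)
        = ((min s (A.x σ u % S.dPlus) : ℕ) : ℤ) := by
          rw [Nat.cast_min, hmz]
      _ ≤ (F.card : ℤ) := by exact_mod_cast hcard
      _ ≤ _ := h1

lemma step_ineq (A : LBAlgo S) {s : ℕ} (hs1 : 1 ≤ s) (hs2 : s ≤ S.dSelf)
    (hA : GoodSBalancer S A s) (c σ : ℕ) (hσ : 1 ≤ σ) :
    phi A (σ + 1) c ≤ phi A σ c - ∑ u : V, Dfun A c σ u := by
  have hrw : ∀ u : V, max ((A.x (σ + 1) u : ℤ) - (c : ℤ) * S.dPlus) 0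
      = ((∑ v ∈ S.nbrs u, max ((A.f σ v u : ℤ) - c) 0)
        + ∑ i : Fin S.dSelf, max ((A.g σ u i : ℤ) - c) 0) - Dfun A c σ u := by
    intro u; unfold Dfun; ring
  unfold phi
  rw [Finset.sum_congr rfl fun u _ => hrw u, Finset.sum_sub_distrib]
  apply sub_le_sub_right
  rw [Finset.sum_add_distrib]
  have hflip : ∑ u : V, ∑ v ∈ S.nbrs u, max ((A.f σ v u : ℤ) - c) 0
      = ∑ u : V, ∑ v ∈ S.nbrs u, max ((A.f σ u v : ℤ) - c) 0 := by
    simp only [LBSetup.nbrs, Finset.sum_filter]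
    rw [Finset.sum_comm]
    refine Finset.sum_congr rfl fun u _ => Finset.sum_congr rfl fun v _ => ?_
    by_cases h : S.Adj u v
    · simp [h, S.symm u v h]
    · have h2 : ¬ (S.Adj v u = true) := fun h2 => h (S.symm v u h2)
      simp [h, h2]
  rw [hflip, ← Finset.sum_add_distrib]
  exact Finset.sum_le_sum fun u _ => out_bound A hs1 hs2 hA c σ hσ u

lemma phi_fold (A : LBAlgo S) {s : ℕ} (hs1 : 1 ≤ s) (hs2 : s ≤ S.dSelf)
    (hA : GoodSBalancer S A s) (c t : ℕ) (ht : 1 ≤ t) :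
    ∀ t', t ≤ t' →
      phi A t' c ≤ phi A t c - ∑ σ ∈ Finset.Ico t t', ∑ u : V, Dfun A c σ u := by
  intro t' htt'
  induction t', htt' using Nat.le_induction with
  | base => simp
  | succ n hn ih =>
      rw [Finset.sum_Ico_succ_top hn]
      have hstep := step_ineq A hs1 hs2 hA c n (le_trans ht hn)
      linarith

/-- The truncated excess `min{s, max{x_σ(u) - c·d⁺, 0}}`. -/
def Psi (A : LBAlgo S) (s c σ : ℕ) (u : V) : ℤ :=
  min (s : ℤ) (max ((A.x σ u : ℤ) - (c : ℤ) * S.dPlus) 0)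

lemma Psi_nonneg (A : LBAlgo S) (s c σ : ℕ) (u : V) : 0 ≤ Psi A s c σ u :=
  le_min (by exact_mod_cast Nat.zero_le s) (le_max_right _ _)

lemma psi_step (A : LBAlgo S) {s : ℕ} (hs1 : 1 ≤ s) (hs2 : s ≤ S.dSelf)
    (hA : GoodSBalancer S A s) (c σ : ℕ) (hσ : 1 ≤ σ) (u : V) :
    Psi A s c σ u - Psi A s c (σ + 1) u ≤ Dfun A c σ u := by
  have hD := D_nonneg A c σ hσ u
  by_cases hx : A.x σ u ≤ c * S.dPlus
  · have h0 : Psi A s c σ u = 0 := by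
      unfold Psi
      have hxz : (A.x σ u : ℤ) - (c : ℤ) * S.dPlus ≤ 0 := by
        have : ((A.x σ u : ℕ) : ℤ) ≤ ((c * S.dPlus : ℕ) : ℤ) := by exact_mod_cast hx
        push_cast at this
        linarith
      rw [max_eq_right hxz]
      exact min_eq_right (by exact_mod_cast Nat.zero_le s)
    rw [h0]
    have := Psi_nonneg A s c (σ + 1) u
    linarith
  · push_neg at hx
    have hsb := self_bound A hs1 hs2 hA c σ hσ u (by omega)
    have hpsiσ : Psi A s c σ u = min (s : ℤ) ((A.x σ u : ℤ) - (c : ℤ) * S.dPlus) := by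
      unfold Psi
      congr 1
      apply max_eq_left
      have : ((c * S.dPlus : ℕ) : ℤ) + 1 ≤ (A.x σ u : ℤ) := by exact_mod_cast hx
      push_cast at this
      linarith
    have hf0 : (0 : ℤ) ≤ ∑ v ∈ S.nbrs u, max ((A.f σ v u : ℤ) - c) 0 :=
      Finset.sum_nonneg fun v _ => le_max_right _ _
    have hD1 : min (s : ℤ) ((A.x σ u : ℤ) - (c : ℤ) * S.dPlus)
        - max ((A.x (σ + 1) u : ℤ) - (c : ℤ) * S.dPlus) 0 ≤ Dfun A c σ u := by
      unfold Dfun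
      linarith
    rw [hpsiσ]
    rcases le_total (s : ℤ) (max ((A.x (σ + 1) u : ℤ) - (c : ℤ) * S.dPlus) 0) with h | h
    · have hpsi' : Psi A s c (σ + 1) u = (s : ℤ) := by
        unfold Psi; exact min_eq_left h
      rw [hpsi']
      have := min_le_left (s : ℤ) ((A.x σ u : ℤ) - (c : ℤ) * S.dPlus)
      linarith
    · have hpsi' : Psi A s c (σ + 1) u
          = max ((A.x (σ + 1) u : ℤ) - (c : ℤ) * S.dPlus) 0 := by
        unfold Psi; exact min_eq_right h
      rw [hpsi']
      linarith

lemma psi_tel (A : LBAlgo S) {s : ℕ} (hs1 : 1 ≤ s) (hs2 : s ≤ S.dSelf)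
    (hA : GoodSBalancer S A s) (c t : ℕ) (ht : 1 ≤ t) (u : V) :
    ∀ tu, t ≤ tu →
      Psi A s c t u - Psi A s c tu u ≤ ∑ σ ∈ Finset.Ico t tu, Dfun A c σ u := by
  intro tu htu
  induction tu, htu using Nat.le_induction with
  | base => simp
  | succ n hn ih =>
      rw [Finset.sum_Ico_succ_top hn]
      have := psi_step A hs1 hs2 hA c n (le_trans ht hn) u
      linarith

end PhiFastDropAux

open PhiFastDropAux in
/-- **Observation 1.** Let `A` be a good `s`-balancer, `t ≤ t'` two time steps, and `U` a
set of nodes each of which has load at least `c·d⁺ + 1` at time `t` and load at most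
`c·d⁺` at some time `t_u ∈ [t, t']`. Then
`φ_{t'}(c) ≤ φ_t(c) − Σ_{u∈U} min{s, x_t(u) − c·d⁺}`. -/
theorem phi_fast_drop (S : LBSetup V) (A : LBAlgo S) (s : ℕ)
    (hs1 : 1 ≤ s) (hs2 : s ≤ S.dSelf) (hA : GoodSBalancer S A s) (c : ℕ)
    (t t' : ℕ) (ht : 1 ≤ t) (htt' : t ≤ t') (U : Finset V)
    (hU : ∀ u ∈ U, c * S.dPlus + 1 ≤ A.x t u ∧
      ∃ tu ∈ Finset.Icc t t', A.x tu u ≤ c * S.dPlus) :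
    phi A t' c ≤ phi A t c -
      ∑ u ∈ U, min (s : ℤ) ((A.x t u : ℤ) - (c : ℤ) * S.dPlus) := by
  have hfold := phi_fold A hs1 hs2 hA c t ht t' htt'
  have hswap : ∑ σ ∈ Finset.Ico t t', ∑ u : V, Dfun A c σ u
      = ∑ u : V, ∑ σ ∈ Finset.Ico t t', Dfun A c σ u := Finset.sum_comm
  have hperu : ∀ u ∈ U, min (s : ℤ) ((A.x t u : ℤ) - (c : ℤ) * S.dPlus)
      ≤ ∑ σ ∈ Finset.Ico t t', Dfun A c σ u := by
    intro u hu
    obtain ⟨hx1, tu, htu, hx2⟩ := hU u hu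
    rw [Finset.mem_Icc] at htu
    rw [← Finset.sum_Ico_consecutive _ htu.1 htu.2]
    have h1 := psi_tel A hs1 hs2 hA c t ht u tu htu.1
    have h2 : (0 : ℤ) ≤ ∑ σ ∈ Finset.Ico tu t', Dfun A c σ u :=
      Finset.sum_nonneg fun σ hσ => by
        have := (Finset.mem_Ico.1 hσ).1
        exact D_nonneg A c σ (by omega) u
    have h3 : Psi A s c tu u = 0 := by
      unfold Psi
      have hxz : (A.x tu u : ℤ) - (c : ℤ) * S.dPlus ≤ 0 := by
        have : ((A.x tu u : ℕ) : ℤ) ≤ ((c * S.dPlus : ℕ) : ℤ) := by exact_mod_cast hx2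
        push_cast at this
        linarith
      rw [max_eq_right hxz]
      exact min_eq_right (by exact_mod_cast Nat.zero_le s)
    have h4 : Psi A s c t u = min (s : ℤ) ((A.x t u : ℤ) - (c : ℤ) * S.dPlus) := by
      unfold Psi
      congr 1
      apply max_eq_left
      have : ((c * S.dPlus : ℕ) : ℤ) + 1 ≤ (A.x t u : ℤ) := by exact_mod_cast hx1
      push_cast at this
      linarith
    linarith
  have hsub : ∑ u ∈ U, min (s : ℤ) ((A.x t u : ℤ) - (c : ℤ) * S.dPlus)
      ≤ ∑ σ ∈ Finset.Ico t t', ∑ u : V, Dfun A c σ u := by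
    rw [hswap]
    calc ∑ u ∈ U, min (s : ℤ) ((A.x t u : ℤ) - (c : ℤ) * S.dPlus)
        ≤ ∑ u ∈ U, ∑ σ ∈ Finset.Ico t t', Dfun A c σ u :=
          Finset.sum_le_sum hperu
      _ ≤ ∑ u : V, ∑ σ ∈ Finset.Ico t t', Dfun A c σ u :=
          Finset.sum_le_sum_of_subset_of_nonneg (Finset.subset_univ U)
            (fun u _ _ => Finset.sum_nonneg fun σ hσ => by
              have := (Finset.mem_Ico.1 hσ).1
              exact D_nonneg A c σ (by omega) u)
  linarith
end

section
/- Let A be a good s-balancer on the balancing graph G⁺ of a finite connected d-regular graph G, and let c ∈ ℕ. Then for every t ≥ 2, φ'_t(c) ≤ φ'_{t−1}(c) − Σ_{u∈V} Δ'_t(c,u), where Δ'_t(c,u) = min{x_t(u), c·d⁺ + s} − max{x_{t−1}(u), c·d⁺} if x_{t−1}(u) < x_t(u), x_{t−1}(u) < c·d⁺ + s and x_t(u) > c·d⁺, and Δ'_t(c,u) = 0 otherwise. In particular, the potential φ'_t(c) is non-increasing in t. -/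
open Finset

variable {V : Type} [Fintype V] [DecidableEq V]

/-- One-step potential drop `Δ'_t(c,u)` (here the step leading from time `t` to `t+1`). -/
def Delta' {S : LBSetup V} (A : LBAlgo S) (s : ℕ) (t : ℕ) (c : ℕ) (u : V) : ℤ :=
  if A.x t u < A.x (t + 1) u ∧ (A.x t u : ℤ) < (c : ℤ) * S.dPlus + s ∧
      (c : ℤ) * S.dPlus < (A.x (t + 1) u : ℤ) then
    min (A.x (t + 1) u : ℤ) ((c : ℤ) * S.dPlus + s) -
      max (A.x t u : ℤ) ((c : ℤ) * S.dPlus)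
  else 0


private lemma cdiv_eq_of_mod_ne {P : ℕ} (x : ℕ) (hP : 0 < P) (h : x % P ≠ 0) :
    cdiv x P = x / P + 1 := by
  unfold cdiv
  have h1 := Nat.div_add_mod x P
  have h2 : x % P < P := Nat.mod_lt _ hP
  rw [show x + P - 1 = P * (x / P + 1) + (x % P - 1) by
    have : P * (x / P + 1) = P * (x / P) + P := by ring
    omega]
  rw [Nat.mul_add_div hP, Nat.div_eq_of_lt (show x % P - 1 < P by omega)]

private lemma cdiv_le' {P : ℕ} (x : ℕ) (hP : 0 < P) : cdiv x P ≤ x / P + 1 := by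
  by_cases h : x % P = 0
  · unfold cdiv
    have h1 := Nat.div_add_mod x P
    rw [show x + P - 1 = P * (x / P) + (P - 1) by omega]
    rw [Nat.mul_add_div hP, Nat.div_eq_of_lt (show P - 1 < P by omega)]
    omega
  · rw [cdiv_eq_of_mod_ne x hP h]

/-- **Lemma 3** (monotonicity of the potential `φ'`).** For a good `s`-balancer, for every
time step `t ≥ 1` and every `c ∈ ℕ`, `φ'_{t+1}(c) ≤ φ'_t(c) − Σ_u Δ'_{t+1}(c,u)`;
in particular `φ'` is non-increasing in time. -/
theorem phi'_potential_drop (S : LBSetup V) (A : LBAlgo S) (s : ℕ)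
    (hs1 : 1 ≤ s) (hs2 : s ≤ S.dSelf) (hA : GoodSBalancer S A s) (c : ℕ) :
    ∀ t, 1 ≤ t →
      phi' A s (t + 1) c ≤ phi' A s t c - ∑ u : V, Delta' A s t c u ∧
      phi' A s (t + 1) c ≤ phi' A s t c := by
  obtain ⟨⟨hfair, -⟩, hgood⟩ := hA
  have hPd : S.dPlus = S.d + S.dSelf := rfl
  have hP0 : 0 < S.dPlus := by omega
  intro t ht
  set C : ℕ := c * S.dPlus + s with hC
  set K : ℕ := S.dSelf * c + s with hK
  have hmemadj : ∀ {u v : V}, v ∈ S.nbrs u → S.Adj u v := by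
    intro u v hv
    exact (Finset.mem_filter.mp hv).2
  have hcardn : ∀ u : V, (S.nbrs u).card = S.d := S.regular
  -- lower bound on self-loop flow totals
  have hself_low : ∀ u : V,
      S.dSelf * (A.x t u / S.dPlus) + min s (A.x t u % S.dPlus)
        ≤ ∑ i : Fin S.dSelf, A.g t u i := by
    intro u
    obtain ⟨-, hg, hcard⟩ := hgood t ht u
    have hgl : ∀ i : Fin S.dSelf, A.x t u / S.dPlus ≤ A.g t u i := (hfair t ht u).2
    by_cases he : A.x t u % S.dPlus = 0
    · have h1 : ∑ _i : Fin S.dSelf, (A.x t u / S.dPlus) ≤ ∑ i : Fin S.dSelf, A.g t u i :=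
        Finset.sum_le_sum fun i _ => hgl i
      simp only [Finset.sum_const, Finset.card_univ, Fintype.card_fin, smul_eq_mul] at h1
      rw [he]
      omega
    · have hcd : cdiv (A.x t u) S.dPlus = A.x t u / S.dPlus + 1 :=
        cdiv_eq_of_mod_ne _ hP0 he
      have hpt : ∀ i : Fin S.dSelf,
          (A.x t u / S.dPlus) +
            (if A.g t u i = cdiv (A.x t u) S.dPlus then 1 else 0) ≤ A.g t u i := by
        intro i
        by_cases hi : A.g t u i = cdiv (A.x t u) S.dPlus
        · simp [hi, hcd]
        · simpa [hi] using hgl i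
      have h1 : ∑ i : Fin S.dSelf, ((A.x t u / S.dPlus) +
            (if A.g t u i = cdiv (A.x t u) S.dPlus then 1 else 0))
          ≤ ∑ i : Fin S.dSelf, A.g t u i := Finset.sum_le_sum fun i _ => hpt i
      rw [Finset.sum_add_distrib] at h1
      simp only [Finset.sum_const, Finset.card_univ, Fintype.card_fin, smul_eq_mul,
        Finset.sum_boole, Nat.cast_id] at h1
      omega
  -- upper bound on self-loop flow totals
  have hself_up : ∀ u : V,
      ∑ i : Fin S.dSelf, A.g t u i ≤ S.dSelf * (A.x t u / S.dPlus) + S.dSelf := by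
    intro u
    obtain ⟨-, hg, -⟩ := hgood t ht u
    have hpt : ∀ i : Fin S.dSelf, A.g t u i ≤ A.x t u / S.dPlus + 1 := by
      intro i
      rcases hg i with h | h
      · omega
      · rw [h]; exact cdiv_le' _ hP0
    have h1 : ∑ i : Fin S.dSelf, A.g t u i ≤ ∑ _i : Fin S.dSelf, (A.x t u / S.dPlus + 1) :=
      Finset.sum_le_sum fun i _ => hpt i
    simp only [Finset.sum_const, Finset.card_univ, Fintype.card_fin, smul_eq_mul] at h1
    have h2 : S.dSelf * (A.x t u / S.dPlus + 1) = S.dSelf * (A.x t u / S.dPlus) + S.dSelf := by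
      ring
    omega
  -- self-loop totals are at most x - d*floor
  have hself_fx : ∀ u : V,
      (∑ i : Fin S.dSelf, A.g t u i) + S.d * (A.x t u / S.dPlus) ≤ A.x t u := by
    intro u
    have hout := A.flow_out t ht u
    have h1 : ∑ _v ∈ S.nbrs u, (A.x t u / S.dPlus) ≤ ∑ v ∈ S.nbrs u, A.f t u v :=
      Finset.sum_le_sum fun v hv => (hfair t ht u).1 v (hmemadj hv)
    rw [Finset.sum_const, hcardn u, smul_eq_mul] at h1
    omega
  -- floor comparisons with c
  have hdiv_lt : ∀ u : V, A.x t u < C → A.x t u / S.dPlus ≤ c := by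
    intro u hx
    have h2 : A.x t u / S.dPlus < c + 1 := by
      rw [Nat.div_lt_iff_lt_mul hP0]
      have h1 : (c + 1) * S.dPlus = c * S.dPlus + S.dPlus := by ring
      omega
    omega
  have hdiv_ge : ∀ u : V, C ≤ A.x t u → c ≤ A.x t u / S.dPlus := by
    intro u hx
    rw [Nat.le_div_iff_mul_le hP0]
    omega
  have hCeq : C = S.d * c + K := by rw [hC, hK, hPd]; ring
  -- key per-node upper estimate at time t
  have upper : ∀ u : V, min (A.x t u) C ≤
      (∑ v ∈ S.nbrs u, min (A.f t u v) c)
        + min (∑ i : Fin S.dSelf, A.g t u i) K := by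
    intro u
    obtain ⟨hf, hg, -⟩ := hgood t ht u
    have hfl : ∀ v ∈ S.nbrs u, A.x t u / S.dPlus ≤ A.f t u v :=
      fun v hv => (hfair t ht u).1 v (hmemadj hv)
    have hfu : ∀ v ∈ S.nbrs u, A.f t u v ≤ A.x t u / S.dPlus + 1 := by
      intro v hv
      rcases hf v (hmemadj hv) with h | h
      · omega
      · rw [h]; exact cdiv_le' _ hP0
    have hmod := Nat.div_add_mod (A.x t u) S.dPlus
    have hmodlt : A.x t u % S.dPlus < S.dPlus := Nat.mod_lt _ hP0
    rcases le_or_gt C (A.x t u) with hx | hx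
    · -- x ≥ C
      have hcq : c ≤ A.x t u / S.dPlus := hdiv_ge u hx
      have h1 : ∑ v ∈ S.nbrs u, min (A.f t u v) c = S.d * c := by
        rw [Finset.sum_congr rfl (fun v hv => min_eq_right (le_trans hcq (hfl v hv)))]
        rw [Finset.sum_const, hcardn u, smul_eq_mul]
      have h2 : K ≤ ∑ i : Fin S.dSelf, A.g t u i := by
        have h3 := hself_low u
        rcases eq_or_lt_of_le hcq with heq | hlt
        · have h4 : S.dPlus * (A.x t u / S.dPlus) = S.dPlus * c := by rw [heq]
          have h5 : S.dPlus * c = c * S.dPlus := by ring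
          have he : s ≤ A.x t u % S.dPlus := by omega
          have h6 : min s (A.x t u % S.dPlus) = s := min_eq_left he
          have h7 : S.dSelf * (A.x t u / S.dPlus) = S.dSelf * c := by rw [heq]
          omega
        · have h4 : S.dSelf * (c + 1) ≤ S.dSelf * (A.x t u / S.dPlus) :=
            Nat.mul_le_mul_left _ hlt
          have h5 : S.dSelf * (c + 1) = S.dSelf * c + S.dSelf := by ring
          omega
      rw [min_eq_right hx, h1, min_eq_right h2]
      omega
    · -- x < C
      have hq : A.x t u / S.dPlus ≤ c := hdiv_lt u hx
      have hout := A.flow_out t ht u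
      rcases eq_or_lt_of_le hq with heq | hlt
      · -- floor = c, remainder < s
        have h4 : S.dPlus * (A.x t u / S.dPlus) = S.dPlus * c := by rw [heq]
        have h5 : S.dPlus * c = c * S.dPlus := by ring
        have he : A.x t u % S.dPlus < s := by omega
        have h1 : ∑ v ∈ S.nbrs u, min (A.f t u v) c = S.d * c := by
          rw [Finset.sum_congr rfl
            (fun v hv => min_eq_right (by rw [← heq]; exact hfl v hv))]
          rw [Finset.sum_const, hcardn u, smul_eq_mul]
        have h2 : S.dSelf * c + A.x t u % S.dPlus ≤ ∑ i : Fin S.dSelf, A.g t u i := by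
          have h3 := hself_low u
          have h6 : min s (A.x t u % S.dPlus) = A.x t u % S.dPlus :=
            min_eq_right (le_of_lt he)
          have h7 : S.dSelf * (A.x t u / S.dPlus) = S.dSelf * c := by rw [heq]
          omega
        have h8 : S.dSelf * c + A.x t u % S.dPlus ≤ K := by omega
        have h9 : S.dSelf * c + A.x t u % S.dPlus
            ≤ min (∑ i : Fin S.dSelf, A.g t u i) K := le_min h2 h8
        have h10 : A.x t u = S.d * c + (S.dSelf * c + A.x t u % S.dPlus) := by
          have h11 : S.dPlus * c = S.d * c + S.dSelf * c := by rw [hPd]; ring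
          omega
        rw [min_eq_left (le_of_lt hx), h1]
        omega
      · -- floor < c
        have h1 : ∑ v ∈ S.nbrs u, min (A.f t u v) c = ∑ v ∈ S.nbrs u, A.f t u v := by
          refine Finset.sum_congr rfl fun v hv => min_eq_left ?_
          have := hfu v hv
          omega
        have h2 : ∑ i : Fin S.dSelf, A.g t u i ≤ K := by
          have h3 := hself_up u
          have h5 : S.dSelf * (A.x t u / S.dPlus + 1) ≤ S.dSelf * c :=
            Nat.mul_le_mul_left _ hlt
          have h6 : S.dSelf * (A.x t u / S.dPlus + 1)
              = S.dSelf * (A.x t u / S.dPlus) + S.dSelf := by ring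
          omega
        rw [min_eq_left (le_of_lt hx), h1, min_eq_left h2]
        omega
  -- key per-node lower estimate at time t+1
  have lower : ∀ u : V,
      (((∑ v ∈ S.nbrs u, min (A.f t v u) c)
          + min (∑ i : Fin S.dSelf, A.g t u i) K : ℕ) : ℤ) + Delta' A s t c u
        ≤ ((min (A.x (t + 1) u) C : ℕ) : ℤ) := by
    intro u
    have hin := A.flow_in t ht u
    have hs1' : ∑ v ∈ S.nbrs u, min (A.f t v u) c ≤ ∑ v ∈ S.nbrs u, A.f t v u :=
      Finset.sum_le_sum fun v _ => min_le_left _ _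
    have hs2' : ∑ v ∈ S.nbrs u, min (A.f t v u) c ≤ S.d * c := by
      calc ∑ v ∈ S.nbrs u, min (A.f t v u) c ≤ ∑ _v ∈ S.nbrs u, c :=
            Finset.sum_le_sum fun v _ => min_le_right _ _
        _ = S.d * c := by rw [Finset.sum_const, hcardn u, smul_eq_mul]
    have hBle1 : (∑ v ∈ S.nbrs u, min (A.f t v u) c)
        + min (∑ i : Fin S.dSelf, A.g t u i) K ≤ A.x (t + 1) u := by
      have h2 : min (∑ i : Fin S.dSelf, A.g t u i) K
          ≤ ∑ i : Fin S.dSelf, A.g t u i := min_le_left _ _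
      omega
    have hBle2 : (∑ v ∈ S.nbrs u, min (A.f t v u) c)
        + min (∑ i : Fin S.dSelf, A.g t u i) K ≤ C := by
      have h2 : min (∑ i : Fin S.dSelf, A.g t u i) K ≤ K := min_le_right _ _
      omega
    have hBmin : (∑ v ∈ S.nbrs u, min (A.f t v u) c)
        + min (∑ i : Fin S.dSelf, A.g t u i) K ≤ min (A.x (t + 1) u) C :=
      le_min hBle1 hBle2
    unfold Delta'
    split_ifs with hcond
    · obtain ⟨hlt1, hlt2, hlt3⟩ := hcond
      have hxC : A.x t u < C := by
        rw [hC]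
        exact_mod_cast hlt2
      have hq : A.x t u / S.dPlus ≤ c := hdiv_lt u hxC
      have hmod := Nat.div_add_mod (A.x t u) S.dPlus
      have hmodlt : A.x t u % S.dPlus < S.dPlus := Nat.mod_lt _ hP0
      have hBmax : (∑ v ∈ S.nbrs u, min (A.f t v u) c)
          + min (∑ i : Fin S.dSelf, A.g t u i) K ≤ max (A.x t u) (c * S.dPlus) := by
        have h8 : min (∑ i : Fin S.dSelf, A.g t u i) K
            ≤ ∑ i : Fin S.dSelf, A.g t u i := min_le_left _ _
        rcases eq_or_lt_of_le hq with heq | hlt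
        · -- floor = c : bound by x_t
          have hfx := hself_fx u
          have h7 : S.d * (A.x t u / S.dPlus) = S.d * c := by rw [heq]
          have h9 : A.x t u ≤ max (A.x t u) (c * S.dPlus) := le_max_left _ _
          omega
        · -- floor < c : bound by c * dPlus
          have h3 := hself_up u
          have h4 : S.dSelf * (A.x t u / S.dPlus + 1) ≤ S.dSelf * c :=
            Nat.mul_le_mul_left _ hlt
          have h5 : S.dSelf * (A.x t u / S.dPlus + 1)
              = S.dSelf * (A.x t u / S.dPlus) + S.dSelf := by ring
          have h6 : c * S.dPlus = S.d * c + S.dSelf * c := by rw [hPd]; ring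
          have h9 : c * S.dPlus ≤ max (A.x t u) (c * S.dPlus) := le_max_right _ _
          omega
      have hZ1 : (((∑ v ∈ S.nbrs u, min (A.f t v u) c)
            + min (∑ i : Fin S.dSelf, A.g t u i) K : ℕ) : ℤ)
          ≤ max ((A.x t u : ℤ)) ((c : ℤ) * (S.dPlus : ℤ)) := by
        exact_mod_cast hBmax
      have hZ2 : ((min (A.x (t + 1) u) C : ℕ) : ℤ)
          = min ((A.x (t + 1) u : ℤ)) ((c : ℤ) * (S.dPlus : ℤ) + (s : ℤ)) := by
        rw [hC]
        push_cast
        rfl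
      rw [hZ2]
      have hle : min ((A.x (t + 1) u : ℤ)) ((c : ℤ) * (S.dPlus : ℤ) + (s : ℤ))
          ≤ min ((A.x (t + 1) u : ℤ)) ((c : ℤ) * (S.dPlus : ℤ) + (s : ℤ)) := le_refl _
      linarith [hZ1]
    · simp only [add_zero]
      exact_mod_cast hBmin
  -- each Delta' is nonnegative
  have hDnn : ∀ u : V, 0 ≤ Delta' A s t c u := by
    intro u
    unfold Delta'
    split_ifs with hcond
    · obtain ⟨h1, h2, h3⟩ := hcond
      have h1' : (A.x t u : ℤ) ≤ (A.x (t + 1) u : ℤ) := by exact_mod_cast le_of_lt h1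
      have h4 : (0 : ℤ) ≤ (s : ℤ) := by positivity
      refine sub_nonneg.2 (max_le (le_min h1' (le_of_lt h2))
        (le_min (le_of_lt h3) (by linarith)))
    · exact le_refl 0
  -- swapping the double sum using symmetry
  have hswap : ∑ u : V, ∑ v ∈ S.nbrs u, min (A.f t u v) c
      = ∑ u : V, ∑ v ∈ S.nbrs u, min (A.f t v u) c := by
    have h1 : ∀ (h : V → V → ℕ),
        ∑ u : V, ∑ v ∈ S.nbrs u, h u v = ∑ v : V, ∑ u ∈ S.nbrs v, h u v := by
      intro h
      simp only [LBSetup.nbrs, Finset.sum_filter]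
      rw [Finset.sum_comm]
      refine Finset.sum_congr rfl fun v _ => Finset.sum_congr rfl fun u _ => ?_
      by_cases hadj : S.Adj u v
      · simp [hadj, S.symm u v hadj]
      · have h2 : ¬(S.Adj v u = true) := fun hh => hadj (S.symm v u hh)
        simp [hadj, h2]
    exact h1 fun u v => min (A.f t u v) c
  -- summing everything up
  have hsum_upper : ∑ u : V, min (A.x t u) C ≤
      ∑ u : V, ((∑ v ∈ S.nbrs u, min (A.f t u v) c)
        + min (∑ i : Fin S.dSelf, A.g t u i) K) :=
    Finset.sum_le_sum fun u _ => upper u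
  have hsum_eq : ∑ u : V, ((∑ v ∈ S.nbrs u, min (A.f t u v) c)
        + min (∑ i : Fin S.dSelf, A.g t u i) K)
      = ∑ u : V, ((∑ v ∈ S.nbrs u, min (A.f t v u) c)
        + min (∑ i : Fin S.dSelf, A.g t u i) K) := by
    rw [Finset.sum_add_distrib, Finset.sum_add_distrib, hswap]
  have hsum_lower :
      (∑ u : V, (((∑ v ∈ S.nbrs u, min (A.f t v u) c)
          + min (∑ i : Fin S.dSelf, A.g t u i) K : ℕ) : ℤ))
        + ∑ u : V, Delta' A s t c u
      ≤ ∑ u : V, ((min (A.x (t + 1) u) C : ℕ) : ℤ) := by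
    rw [← Finset.sum_add_distrib]
    exact Finset.sum_le_sum fun u _ => lower u
  have key : (∑ u : V, ((min (A.x t u) C : ℕ) : ℤ)) + ∑ u : V, Delta' A s t c u
      ≤ ∑ u : V, ((min (A.x (t + 1) u) C : ℕ) : ℤ) := by
    have h1 : (∑ u : V, ((min (A.x t u) C : ℕ) : ℤ))
        ≤ ∑ u : V, (((∑ v ∈ S.nbrs u, min (A.f t v u) c)
          + min (∑ i : Fin S.dSelf, A.g t u i) K : ℕ) : ℤ) := by
      have h2 := hsum_upper
      rw [hsum_eq] at h2
      exact_mod_cast h2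
    linarith [hsum_lower]
  -- rewrite the potential in terms of capped loads
  have hphi : ∀ τ : ℕ, phi' A s τ c
      = (∑ _v : V, ((c : ℤ) * (S.dPlus : ℤ) + (s : ℤ)))
        - ∑ v : V, ((min (A.x τ v) C : ℕ) : ℤ) := by
    intro τ
    simp only [phi']
    rw [← Finset.sum_sub_distrib]
    refine Finset.sum_congr rfl fun v _ => ?_
    have hc : ((min (A.x τ v) C : ℕ) : ℤ)
        = min ((A.x τ v : ℤ)) ((c : ℤ) * (S.dPlus : ℤ) + (s : ℤ)) := by
      rw [hC]
      push_cast
      rfl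
    rw [hc]
    rcases le_total ((A.x τ v : ℤ)) ((c : ℤ) * (S.dPlus : ℤ) + (s : ℤ)) with h | h
    · rw [min_eq_left h, max_eq_left (by linarith)]
    · rw [min_eq_right h, max_eq_right (by linarith)]
      ring
  have hDsum : (0 : ℤ) ≤ ∑ u : V, Delta' A s t c u :=
    Finset.sum_nonneg fun u _ => hDnn u
  constructor
  · rw [hphi (t + 1), hphi t]
    linarith [key]
  · rw [hphi (t + 1), hphi t]
    linarith [key]
end

section
/- Let A be a good s-balancer on the balancing graph G⁺ of a finite connected d-regular graph G, let c ∈ ℕ, and let t ≤ t' be two time steps. Let U ⊆ V be a set of nodes such that every u ∈ U satisfies x_t(u) < c·d⁺ + s and there exists a time step t_u ∈ [t, t'] with x_{t_u}(u) ≥ c·d⁺ + s. Then φ'_{t'}(c) ≤ φ'_t(c) − Σ_{u∈U} min{s, c·d⁺ + s − x_t(u)}. -/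
open Finset

variable {V : Type} [Fintype V] [DecidableEq V]

lemma sum_sub_add_card_lt_le {ι : Type*} (s : Finset ι) (c : ℤ) (g : ι → ℤ) :
    ∑ i ∈ s, (c - g i) + #{i ∈ s | c < g i} ≤ ∑ i ∈ s, max (c - g i) 0 := by
  rw [card_filter, Nat.cast_sum, ← sum_add_distrib]
  refine sum_le_sum fun i _ => ?_
  split_ifs <;> push_cast <;> omega

lemma le_sub_sum_of_sub_sum_antitone {α ι : Type*} [AddCommGroup α] [LinearOrder α]
    [IsOrderedAddMonoid α] (a : ℕ → α) (m : ℕ → ι → α) {t t' : ℕ} (htt' : t ≤ t')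
    (U : Finset ι)
    (hstep : ∀ τ, t ≤ τ → τ < t' → ∀ W ⊆ U,
      a (τ + 1) - ∑ u ∈ W, m (τ + 1) u ≤ a τ - ∑ u ∈ W, m τ u)
    (hzero : ∀ u ∈ U, ∃ τ ∈ Icc t t', m τ u = 0) :
    a t' ≤ a t - ∑ u ∈ U, m t u := by
  classical
  let pending : ℕ → Finset ι := fun τ => {u ∈ U | ∀ σ ∈ Icc t τ, m σ u ≠ 0}
  have key : ∀ τ, t ≤ τ → τ ≤ t' →
      a τ - ∑ u ∈ pending τ, m τ u ≤ a t - ∑ u ∈ U, m t u := by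
    intro τ hτ
    induction τ, hτ using Nat.le_induction with
    | base =>
      intro _
      have hpending : pending t = {u ∈ U | m t u ≠ 0} := by
        simp only [pending, Icc_self, mem_singleton, forall_eq]
      rw [hpending, sum_filter_ne_zero]
    | succ τ hτ ih =>
      intro hτ'
      have hsub : pending (τ + 1) ⊆ pending τ := fun u hu => by
        simp only [pending, mem_filter, mem_Icc] at hu ⊢
        exact ⟨hu.1, fun σ hσ => hu.2 σ ⟨hσ.1, by omega⟩⟩
      have hsum : ∑ u ∈ pending (τ + 1), m (τ + 1) u = ∑ u ∈ pending τ, m (τ + 1) u := by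
        refine sum_subset hsub fun u hu hnot => ?_
        simp only [pending, mem_filter, mem_Icc, not_and, not_forall, not_not] at hu hnot
        obtain ⟨σ, ⟨hσt, hστ⟩, hσ⟩ := hnot hu.1
        rcases Nat.lt_or_ge σ (τ + 1) with h | h
        · exact absurd hσ (hu.2 σ ⟨hσt, by omega⟩)
        · rwa [show σ = τ + 1 by omega] at hσ
      calc a (τ + 1) - ∑ u ∈ pending (τ + 1), m (τ + 1) u
          ≤ a τ - ∑ u ∈ pending τ, m τ u :=
            hsum ▸ hstep τ hτ hτ' (pending τ) (filter_subset _ _)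
        _ ≤ a t - ∑ u ∈ U, m t u := ih (by omega)
  have hdone : pending t' = ∅ := filter_eq_empty_iff.2 fun u hu hne => by
    obtain ⟨τ, hτ, h0⟩ := hzero u hu
    exact hne τ hτ h0
  simpa [hdone] using key t' htt' le_rfl

namespace LBSetup

variable (S : LBSetup V)

lemma adj_comm (u v : V) : S.Adj u v = S.Adj v u := by
  cases h : S.Adj v u
  · exact Bool.eq_false_iff.2 fun h' => by simpa [h] using S.symm u v h'
  · exact S.symm v u h

lemma sum_sum_nbrs_comm {β : Type*} [AddCommMonoid β] (F : V → V → β) :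
    ∑ u, ∑ v ∈ S.nbrs u, F v u = ∑ u, ∑ v ∈ S.nbrs u, F u v := by
  simp only [nbrs, sum_filter]
  rw [sum_comm]
  simp only [S.adj_comm]

lemma mul_dPlus_sub_sum (u : V) (c : ℤ) (f : V → ℤ) (g : Fin S.dSelf → ℤ) :
    c * S.dPlus - (∑ v ∈ S.nbrs u, f v + ∑ i, g i)
      = ∑ v ∈ S.nbrs u, (c - f v) + ∑ i, (c - g i) := by
  have hcard : (S.nbrs u).card = S.d := S.regular u
  simp only [sum_sub_distrib, sum_const, hcard, card_univ, Fintype.card_fin, nsmul_eq_mul, dPlus]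
  push_cast
  ring

end LBSetup

section Balancer

variable {S : LBSetup V} (A : LBAlgo S) (s c : ℕ)

def loadDeficit (τ : ℕ) (u : V) : ℤ := max ((c : ℤ) * S.dPlus + s - A.x τ u) 0

/-- The self-loops of `u` should carry `c` tokens each, plus one more on `s` of them. -/
def selfLoopDeficit (τ : ℕ) (u : V) : ℤ :=
  ∑ i, max ((c : ℤ) - A.g τ u i) 0 + max ((s : ℤ) - #{i | c < A.g τ u i}) 0

variable {A s c}

lemma GoodSBalancer.f_bounds (hA : GoodSBalancer S A s) {τ : ℕ} (hτ : 1 ≤ τ) {u v : V}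
    (hv : v ∈ S.nbrs u) :
    A.x τ u / S.dPlus ≤ A.f τ u v ∧ A.f τ u v ≤ cdiv (A.x τ u) S.dPlus := by
  have := div_le_cdiv (A.x τ u) S.dPlus
  rcases (hA.2 τ hτ u).1 v (by simpa [LBSetup.nbrs] using hv) with h | h <;> omega

lemma GoodSBalancer.g_bounds (hA : GoodSBalancer S A s) {τ : ℕ} (hτ : 1 ≤ τ) (u : V)
    (i : Fin S.dSelf) :
    A.x τ u / S.dPlus ≤ A.g τ u i ∧ A.g τ u i ≤ cdiv (A.x τ u) S.dPlus := by
  have := div_le_cdiv (A.x τ u) S.dPlus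
  rcases (hA.2 τ hτ u).2.1 i with h | h <;> omega

lemma sum_max_sub_eq_zero {ι : Type*} {s : Finset ι} {c : ℕ} {f : ι → ℕ}
    (h : ∀ i ∈ s, c ≤ f i) : ∑ i ∈ s, max ((c : ℤ) - f i) 0 = 0 :=
  sum_eq_zero fun i hi => max_eq_right (by have := h i hi; omega)

lemma sum_max_sub_eq_sum {ι : Type*} {s : Finset ι} {c : ℕ} {f : ι → ℕ}
    (h : ∀ i ∈ s, f i ≤ c) : ∑ i ∈ s, max ((c : ℤ) - f i) 0 = ∑ i ∈ s, ((c : ℤ) - f i) :=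
  sum_congr rfl fun i hi => max_eq_left (by have := h i hi; omega)

lemma LBAlgo.mul_dPlus_sub_x (A : LBAlgo S) {τ : ℕ} (hτ : 1 ≤ τ) (c : ℤ) (u : V) :
    c * S.dPlus - A.x τ u
      = ∑ v ∈ S.nbrs u, (c - A.f τ u v) + ∑ i, (c - A.g τ u i) := by
  rw [A.flow_out τ hτ u]
  push_cast
  exact S.mul_dPlus_sub_sum u c _ _

lemma LBAlgo.mul_dPlus_sub_x_succ (A : LBAlgo S) {τ : ℕ} (hτ : 1 ≤ τ) (c : ℤ) (u : V) :
    c * S.dPlus - A.x (τ + 1) u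
      = ∑ v ∈ S.nbrs u, (c - A.f τ v u) + ∑ i, (c - A.g τ u i) := by
  rw [A.flow_in τ hτ u]
  push_cast
  exact S.mul_dPlus_sub_sum u c _ _

lemma GoodSBalancer.outDeficit_le (hs : s ≤ S.dSelf) (hA : GoodSBalancer S A s) {τ : ℕ}
    (hτ : 1 ≤ τ) (u : V) :
    ∑ v ∈ S.nbrs u, max ((c : ℤ) - A.f τ u v) 0 + selfLoopDeficit A s c τ u
      ≤ loadDeficit A s c τ u := by
  have hf := fun v (hv : v ∈ S.nbrs u) => hA.f_bounds hτ hv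
  have hg := hA.g_bounds hτ u
  have hceil := cdiv_le_div_add_one (A.x τ u) S.dPlus
  have hx := A.mul_dPlus_sub_x hτ c u
  unfold selfLoopDeficit loadDeficit
  rcases le_or_gt (cdiv (A.x τ u) S.dPlus) c with hle | hlt
  · have hk : #{i | c < A.g τ u i} = 0 :=
      card_eq_zero.2 (filter_eq_empty_iff.2 fun i _ => by have := hg i; omega)
    rw [sum_max_sub_eq_sum fun v hv => (hf v hv).2.trans hle,
      sum_max_sub_eq_sum fun i _ => (hg i).2.trans hle, hk]
    omega
  · rw [sum_max_sub_eq_zero fun v hv => by have := hf v hv; omega,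
      sum_max_sub_eq_zero fun i _ => by have := hg i; omega]
    rcases lt_or_ge c (A.x τ u / S.dPlus) with hq | hq
    · have hk : #{i | c < A.g τ u i} = S.dSelf := by
        rw [filter_true_of_mem fun i _ => by have := hg i; omega, card_univ, Fintype.card_fin]
      rw [hk]
      omega
    · have hk : #{i | c < A.g τ u i} = #{i | A.g τ u i = cdiv (A.x τ u) S.dPlus} :=
        congrArg card (filter_congr fun i _ => by have := hg i; omega)
      have hpref := (hA.2 τ hτ u).2.2
      have hmod : (c : ℤ) * S.dPlus + (A.x τ u % S.dPlus : ℕ) = A.x τ u := by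
        have := Nat.div_add_mod (A.x τ u) S.dPlus
        rw [show A.x τ u / S.dPlus = c by omega, mul_comm] at this
        exact_mod_cast this
      rw [hk]
      omega

lemma GoodSBalancer.min_loadDeficit_le (hA : GoodSBalancer S A s) {τ : ℕ} (hτ : 1 ≤ τ)
    (u : V) :
    min (s : ℤ) (loadDeficit A s c τ u) ≤ max ((s : ℤ) - #{i | c < A.g τ u i}) 0 := by
  have hg := hA.g_bounds hτ u
  unfold loadDeficit
  rcases le_or_gt (cdiv (A.x τ u) S.dPlus) c with hle | hlt
  · have hk : #{i | c < A.g τ u i} = 0 :=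
      card_eq_zero.2 (filter_eq_empty_iff.2 fun i _ => by have := hg i; omega)
    rw [hk]
    omega
  · have hceil := cdiv_le_div_add_one (A.x τ u) S.dPlus
    have hx := A.mul_dPlus_sub_x hτ c u
    have hf : ∑ v ∈ S.nbrs u, ((c : ℤ) - A.f τ u v) ≤ 0 :=
      sum_nonpos fun v hv => by have := hA.f_bounds hτ hv; omega
    have hself := sum_sub_add_card_lt_le univ (c : ℤ) fun i => (A.g τ u i : ℤ)
    rw [sum_max_sub_eq_zero fun i _ => by have := hg i; omega] at hself
    simp only [Nat.cast_lt] at hself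
    omega

lemma GoodSBalancer.loadDeficit_succ_add_le (hA : GoodSBalancer S A s) {τ : ℕ} (hτ : 1 ≤ τ)
    (u : V) :
    loadDeficit A s c (τ + 1) u
        + max (min (s : ℤ) (loadDeficit A s c τ u) - min (s : ℤ) (loadDeficit A s c (τ + 1) u)) 0
      ≤ ∑ v ∈ S.nbrs u, max ((c : ℤ) - A.f τ v u) 0 + selfLoopDeficit A s c τ u := by
  have hx := A.mul_dPlus_sub_x_succ hτ c u
  have hf : ∑ v ∈ S.nbrs u, ((c : ℤ) - A.f τ v u) ≤ ∑ v ∈ S.nbrs u, max ((c : ℤ) - A.f τ v u) 0 :=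
    sum_le_sum fun v _ => le_max_left _ _
  have hf0 : 0 ≤ ∑ v ∈ S.nbrs u, max ((c : ℤ) - A.f τ v u) 0 :=
    sum_nonneg fun v _ => le_max_right _ _
  have hg0 : 0 ≤ ∑ i, max ((c : ℤ) - A.g τ u i) 0 := sum_nonneg fun i _ => le_max_right _ _
  have hself := sum_sub_add_card_lt_le univ (c : ℤ) fun i => (A.g τ u i : ℤ)
  simp only [Nat.cast_lt] at hself
  have hmin := hA.min_loadDeficit_le (c := c) hτ u
  unfold selfLoopDeficit
  unfold loadDeficit at hmin ⊢
  omega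

lemma GoodSBalancer.phi'_succ_sub_sum_le (hs : s ≤ S.dSelf) (hA : GoodSBalancer S A s)
    (c : ℕ) {τ : ℕ} (hτ : 1 ≤ τ) (W : Finset V) :
    phi' A s (τ + 1) c - ∑ u ∈ W, min (s : ℤ) (loadDeficit A s c (τ + 1) u)
      ≤ phi' A s τ c - ∑ u ∈ W, min (s : ℤ) (loadDeficit A s c τ u) := by
  set m : ℕ → V → ℤ := fun τ u => min (s : ℤ) (loadDeficit A s c τ u)
  have hW : ∑ u ∈ W, (m τ u - m (τ + 1) u) ≤ ∑ u, max (m τ u - m (τ + 1) u) 0 :=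
    (sum_le_sum fun u _ => le_max_left _ _).trans
      (sum_le_sum_of_subset_of_nonneg (subset_univ W) fun _ _ _ => le_max_right _ _)
  have hin := sum_le_sum fun u (_ : u ∈ univ) => hA.loadDeficit_succ_add_le (c := c) hτ u
  have hout := sum_le_sum fun u (_ : u ∈ univ) => hA.outDeficit_le (c := c) hs hτ u
  rw [sum_add_distrib, sum_add_distrib, S.sum_sum_nbrs_comm] at hin
  rw [sum_add_distrib] at hout
  rw [sum_sub_distrib] at hW
  change ∑ u, loadDeficit A s c (τ + 1) u - _ ≤ ∑ u, loadDeficit A s c τ u - _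
  linarith

end Balancer

theorem phi'_fast_drop_general (S : LBSetup V) (A : LBAlgo S) (s : ℕ)
    (hs2 : s ≤ S.dSelf) (hA : GoodSBalancer S A s) (c : ℕ)
    (t t' : ℕ) (ht : 1 ≤ t) (htt' : t ≤ t') (U : Finset V)
    (hU : ∀ u ∈ U, A.x t u < c * S.dPlus + s ∧
      ∃ tu ∈ Finset.Icc t t', c * S.dPlus + s ≤ A.x tu u) :
    phi' A s t' c ≤ phi' A s t c -
      ∑ u ∈ U, min (s : ℤ) ((c : ℤ) * S.dPlus + (s : ℤ) - (A.x t u : ℤ)) := by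
  have hstart : ∀ u ∈ U, min (s : ℤ) ((c : ℤ) * S.dPlus + s - A.x t u)
      = min (s : ℤ) (loadDeficit A s c t u) := fun u hu => by
    have := (hU u hu).1
    unfold loadDeficit
    omega
  rw [sum_congr rfl hstart]
  refine le_sub_sum_of_sub_sum_antitone (fun τ => phi' A s τ c)
    (fun τ u => min (s : ℤ) (loadDeficit A s c τ u)) htt' U
    (fun τ hτ _ W _ => hA.phi'_succ_sub_sum_le hs2 c (ht.trans hτ) W) fun u hu => ?_
  obtain ⟨tu, htu, hreach⟩ := (hU u hu).2
  refine ⟨tu, htu, ?_⟩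
  unfold loadDeficit
  omega

/-- **Observation 2.** Let `A` be a good `s`-balancer, `t ≤ t'` two time steps, and `U` a
set of nodes each of which has load less than `c·d⁺ + s` at time `t` and load at least
`c·d⁺ + s` at some time `t_u ∈ [t, t']`. Then
`φ'_{t'}(c) ≤ φ'_t(c) − Σ_{u∈U} min{s, c·d⁺ + s − x_t(u)}`. -/
theorem phi'_fast_drop (S : LBSetup V) (A : LBAlgo S) (s : ℕ)
    (hs1 : 1 ≤ s) (hs2 : s ≤ S.dSelf) (hA : GoodSBalancer S A s) (c : ℕ)
    (t t' : ℕ) (ht : 1 ≤ t) (htt' : t ≤ t') (U : Finset V)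
    (hU : ∀ u ∈ U, A.x t u < c * S.dPlus + s ∧
      ∃ tu ∈ Finset.Icc t t', c * S.dPlus + s ≤ A.x tu u) :
    phi' A s t' c ≤ phi' A s t c -
      ∑ u ∈ U, min (s : ℤ) ((c : ℤ) * S.dPlus + (s : ℤ) - (A.x t u : ℤ)) :=
  phi'_fast_drop_general S A s hs2 hA c t t' ht htt' U hU
end

section
/- Let G be a finite connected d-regular graph with diameter diam(G) ≥ 2. Then there exist an initial distribution of tokens x_1 : V → ℕ and a round-fair balancer on G (with no self-loops) such that for every time step t the discrepancy satisfies max_{u∈V} x_t(u) − min_{u∈V} x_t(u) ≥ d·(diam(G) − 1). -/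
open Finset

variable {V : Type} [Fintype V] [DecidableEq V]

/-- The underlying simple graph of the setup. -/
def LBSetup.toSimpleGraph (S : LBSetup V) : SimpleGraph V where
  Adj u v := S.Adj u v
  symm := ⟨fun u v h => S.symm u v h⟩
  loopless := ⟨fun u h => S.loopless u h⟩

/-- A round-fair balancer (on a graph without self-loops): in every step, every edge
outgoing from `u` carries either `⌊x_t(u)/d⌋` or `⌈x_t(u)/d⌉` tokens. -/
def RoundFair (S : LBSetup V) (A : LBAlgo S) : Prop :=
  ∀ t, 1 ≤ t → ∀ u v : V, S.Adj u v →
    A.f t u v = A.x t u / S.d ∨ A.f t u v = cdiv (A.x t u) S.d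

/-!
Fix a vertex `r` and let `h u` be the graph distance from `r` to `u`. Let every edge `(u, v)`
carry `min (h u) (h v)` tokens in every step. This flow is symmetric, so the load never
changes. Since `h` changes by at most one along an edge, all edges leaving `u` carry `h u - 1`
or `h u` tokens, and such an integer split of the load is automatically round-fair. The load
is `0` at `r` and at least `d · (h u - 1)` at any `u`, hence at least `d · (diam G - 1)` at a
vertex at distance `diam G` from `r`.
-/

theorem cdiv_eq_succ_of_lt_of_le {x d m : ℕ} (hlt : m * d < x) (hle : x ≤ (m + 1) * d) :
    cdiv x d = m + 1 := by
  unfold cdiv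
  apply Nat.div_eq_of_lt_le <;> rw [Nat.add_mul] at * <;> grind

theorem eq_div_or_eq_cdiv_of_forall_eq_or_eq_succ {ι : Type*} [DecidableEq ι] {s : Finset ι}
    {a : ι → ℕ} {m : ℕ} (ha : ∀ i ∈ s, a i = m ∨ a i = m + 1) {j : ι} (hj : j ∈ s) :
    a j = (∑ i ∈ s, a i) / #s ∨ a j = cdiv (∑ i ∈ s, a i) #s := by
  have hsplit : ∑ i ∈ s, a i = a j + ∑ i ∈ s.erase j, a i := (add_sum_erase s a hj).symm
  have hcard : #(s.erase j) + 1 = #s := card_erase_add_one hj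
  have hlow : #(s.erase j) * m ≤ ∑ i ∈ s.erase j, a i := by
    simpa using card_nsmul_le_sum _ a m fun i hi => (ha i (mem_of_mem_erase hi)).elim ge_of_eq
      fun h => by omega
  have hupp : ∑ i ∈ s.erase j, a i ≤ #(s.erase j) * (m + 1) := by
    simpa using sum_le_card_nsmul _ a (m + 1) fun i hi =>
      (ha i (mem_of_mem_erase hi)).elim (fun h => by omega) le_of_eq
  rcases ha j hj with hj | hj
  · left
    rw [hj, eq_comm]
    apply Nat.div_eq_of_lt_le <;> rw [← hcard] <;> grind
  · right
    rw [hj, eq_comm]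
    apply cdiv_eq_succ_of_lt_of_le <;> rw [← hcard] <;> grind

theorem SimpleGraph.Adj.dist_le_dist_add_one {W : Type*} {G : SimpleGraph W} {u v : W}
    (hadj : G.Adj u v) (r : W) : G.dist r u ≤ G.dist r v + 1 := by
  rcases hadj.diff_dist_adj (u := r) with h | h | h <;> omega

theorem LBSetup.mem_nbrs (S : LBSetup V) {u v : V} : v ∈ S.nbrs u ↔ S.Adj u v := by
  simp [LBSetup.nbrs]

theorem LBSetup.card_nbrs (S : LBSetup V) (u : V) : #(S.nbrs u) = S.d :=
  S.regular u

theorem sub_le_disc {S : LBSetup V} [Nonempty V] (A : LBAlgo S) (t : ℕ) (u v : V) :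
    A.x t v - A.x t u ≤ disc A t :=
  tsub_le_tsub (le_sup' (A.x t) (mem_univ v)) (inf'_le (A.x t) (mem_univ u))

namespace LBAlgo

variable (S : LBSetup V) (h : V → ℕ)

def ofHeight : LBAlgo S where
  f _ u v := min (h u) (h v)
  g _ _ _ := 0
  x _ u := ∑ v ∈ S.nbrs u, min (h u) (h v)
  flow_out _ _ _ := by simp
  flow_in _ _ _ := by simp [min_comm]

variable {S h}

theorem ofHeight_roundFair (hh : ∀ u v, S.Adj u v → h u ≤ h v + 1) :
    RoundFair S (ofHeight S h) := by
  intro t _ u v huv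
  rw [← S.card_nbrs u]
  refine eq_div_or_eq_cdiv_of_forall_eq_or_eq_succ (m := h u - 1) (fun w hw => ?_)
    (S.mem_nbrs.2 huv)
  have := hh u w (S.mem_nbrs.1 hw)
  dsimp only [ofHeight]
  omega

theorem ofHeight_x_eq_zero {u : V} (hu : h u = 0) (t : ℕ) : (ofHeight S h).x t u = 0 := by
  simp [ofHeight, hu]

theorem mul_sub_one_le_ofHeight_x (hh : ∀ u v, S.Adj u v → h u ≤ h v + 1) (t : ℕ) (u : V) :
    S.d * (h u - 1) ≤ (ofHeight S h).x t u := by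
  simpa [S.card_nbrs, ofHeight] using
    card_nsmul_le_sum (S.nbrs u) (fun v => min (h u) (h v)) (h u - 1) fun v hv => by
      have := hh u v (S.mem_nbrs.1 hv)
      omega

end LBAlgo

theorem roundFair_lower_bound_general (V : Type) [Fintype V] [DecidableEq V] [Nonempty V]
    (S : LBSetup V) :
    ∃ A : LBAlgo S, RoundFair S A ∧
      ∀ t, 1 ≤ t → S.d * (S.toSimpleGraph.diam - 1) ≤ disc A t := by
  set G := S.toSimpleGraph
  obtain ⟨r, w, hrw⟩ := G.exists_dist_eq_diam
  have hlip : ∀ u v, S.Adj u v → G.dist r u ≤ G.dist r v + 1 := fun u v huv =>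
    SimpleGraph.Adj.dist_le_dist_add_one (G := G) huv r
  refine ⟨LBAlgo.ofHeight S (G.dist r), LBAlgo.ofHeight_roundFair hlip, fun t _ => ?_⟩
  calc S.d * (G.diam - 1)
      ≤ (LBAlgo.ofHeight S (G.dist r)).x t w := hrw ▸ LBAlgo.mul_sub_one_le_ofHeight_x hlip t w
    _ = (LBAlgo.ofHeight S (G.dist r)).x t w - (LBAlgo.ofHeight S (G.dist r)).x t r := by
      rw [LBAlgo.ofHeight_x_eq_zero G.dist_self t, Nat.sub_zero]
    _ ≤ disc _ t := sub_le_disc _ t r w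

/-- **Theorem 3 (lower bound for round-fair balancers).** On every connected `d`-regular
graph of diameter at least `2` (with no self-loops added), there exist an initial token
distribution and a round-fair balancer whose discrepancy at every time step is at least
`d·(diam(G) − 1)`. -/
theorem roundFair_lower_bound (V : Type) [Fintype V] [DecidableEq V] [Nonempty V]
    (S : LBSetup V) (hself : S.dSelf = 0)
    (hdiam : 2 ≤ S.toSimpleGraph.diam) :
    ∃ A : LBAlgo S, RoundFair S A ∧
      ∀ t, 1 ≤ t → S.d * (S.toSimpleGraph.diam - 1) ≤ disc A t :=
  roundFair_lower_bound_general V S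
end

section
/- Let d ≥ 4 and let A be an arbitrary deterministic stateless load-balancing algorithm for d-regular graphs, given by a function g : ℕ → ℕ^{d+1}, g(x) = (p⁰(x), p₁(x), …, p_d(x)), with p⁰(x) + Σ_{i=1}^d p_i(x) = x, where a node with current load x keeps p⁰(x) tokens and sends the d values p₁(x), …, p_d(x) along its d edges in some order. Then for every even n > 2d there exist a d-regular graph G on n vertices, an initial load distribution, and an execution of A on G (i.e., for every step and every node, a bijective assignment of the values p₁(x), …, p_d(x) to that node's d outgoing edges, where x is the node's current load) such that for every time step t the discrepancy equals ⌊d/2⌋ − 1; in particular A cannot achieve a discrepancy better than c·d for some universal constant c > 0. -/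
open Finset

variable {V : Type} [Fintype V] [DecidableEq V]

/-!
Take the Cayley graph of `ℤ/n` on a symmetric set `S` of `d` offsets that contains `±1` and at
least `L = ⌊d/2⌋ - 1` even offsets, and put `L` tokens on every even node and none on the odd
ones. Since `∑ pᵢ(L) ≤ L`, at most `L` of the values `pᵢ(L)` are nonzero, so every even node can
send them all along even offsets and send `0` along the odd ones. By translation invariance every
even node then receives `∑ pᵢ(L) = L - p⁰(L)` tokens back from its even neighbours and the odd
nodes receive nothing, so the load vector is a fixed point with discrepancy `L`.
-/

theorem Finset.card_filter_ne_zero_le_sum {ι : Type*} (s : Finset ι) (f : ι → ℕ) :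
    #{i ∈ s | f i ≠ 0} ≤ ∑ i ∈ s, f i :=
  calc #{i ∈ s | f i ≠ 0} = ∑ i ∈ s with f i ≠ 0, 1 := card_eq_sum_ones _
    _ ≤ ∑ i ∈ s with f i ≠ 0, f i :=
      sum_le_sum fun _ hi => Nat.one_le_iff_ne_zero.2 (mem_filter.1 hi).2
    _ = ∑ i ∈ s, f i := sum_filter_ne_zero s

theorem exists_equiv_forall_imp_of_card_filter_le {α β : Type*} [Fintype α] [Fintype β]
    (hcard : Fintype.card α = Fintype.card β) (P : α → Prop) [DecidablePred P]
    (Q : β → Prop) [DecidablePred Q] (hle : #{a | P a} ≤ #{b | Q b}) :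
    ∃ e : α ≃ β, ∀ a, P a → Q (e a) := by
  classical
  obtain ⟨T, hTQ, hTcard⟩ := exists_subset_card_eq hle
  have hP : Fintype.card {a // P a} = Fintype.card {b // b ∈ T} := by
    simp [Fintype.card_subtype, hTcard]
  have hnotP : Fintype.card {a // ¬ P a} = Fintype.card {b // b ∉ T} := by
    rw [Fintype.card_subtype_compl, Fintype.card_subtype_compl, hcard, hP]
  refine ⟨(Equiv.sumCompl P).symm.trans <|
    ((Fintype.equivOfCardEq hP).sumCongr (Fintype.equivOfCardEq hnotP)).trans
      (Equiv.sumCompl (· ∈ T)), fun a ha => ?_⟩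
  rw [Equiv.trans_apply, Equiv.trans_apply, Equiv.sumCompl_symm_apply_of_pos ha,
    Equiv.sumCongr_apply, Sum.map_inl, Equiv.sumCompl_apply_inl]
  exact (mem_filter.1 (hTQ (Fintype.equivOfCardEq hP ⟨a, ha⟩).2)).2

/-- As `∑ i, p i L ≤ L`, at most `L` of the values `p i L` are nonzero, so all of them fit on ports
satisfying `P`. -/
theorem exists_equiv_apply_eq_zero_of_not {α : Type*} {S : Finset α} (P : α → Prop)
    [DecidablePred P] {d L : ℕ} (p : Fin d → ℕ → ℕ) (hpL : ∑ i, p i L ≤ L) (hScard : #S = d)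
    (hSP : L ≤ #{s ∈ S | P s}) :
    ∃ σ : {s // s ∈ S} ≃ Fin d, ∀ s : {s // s ∈ S}, ¬ P s → p (σ s) L = 0 := by
  refine exists_equiv_forall_imp_of_card_filter_le
    (by rw [Fintype.card_coe, Fintype.card_fin, hScard]) (fun s : {s // s ∈ S} => ¬ P s)
    (fun i => p i L = 0) ?_
  have hnonzero : #{i | p i L ≠ 0} ≤ L := (card_filter_ne_zero_le_sum _ _).trans hpL
  have hsplitS : #{s ∈ S | P s} + #{s ∈ S | ¬ P s} = d :=
    hScard ▸ card_filter_add_card_filter_not P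
  have hsplitp : #{i | p i L = 0} + #{i | p i L ≠ 0} = d := by
    simpa using card_filter_add_card_filter_not (s := univ) fun i : Fin d => p i L = 0
  rw [univ_eq_attach, filter_attach (fun s => ¬ P s), card_map, card_attach]
  omega

section AddCommGroup

variable {Γ : Type*} [AddCommGroup Γ] {S : Finset Γ}

theorem reflTransGen_add_of_mem_closure (hSneg : ∀ s ∈ S, -s ∈ S) {g : Γ}
    (hg : g ∈ AddSubgroup.closure (S : Set Γ)) (u : Γ) :
    Relation.ReflTransGen (fun a b => b - a ∈ S) u (u + g) := by
  have : Std.Symm fun a b : Γ => b - a ∈ S :=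
    ⟨fun a b h => by simpa using hSneg _ h⟩
  induction hg using AddSubgroup.closure_induction generalizing u with
  | mem s hs => exact .single (by simpa using hs)
  | zero => simpa using .refl
  | add x y _ _ hx hy => simpa [add_assoc] using (hx u).trans (hy (u + x))
  | neg x _ hx => simpa using Std.Symm.symm _ _ (hx (u + -x))

theorem filter_sub_mem_eq_image [Fintype Γ] [DecidableEq Γ] (u : Γ) :
    ({v | v - u ∈ S} : Finset Γ) = S.image (u + ·) := by
  ext v
  simp only [mem_filter, mem_univ, true_and, mem_image]
  exact ⟨fun h => ⟨v - u, h, add_sub_cancel u v⟩, by rintro ⟨s, hs, rfl⟩; simpa using hs⟩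

end AddCommGroup

namespace LBSetup

variable {Γ : Type} [AddCommGroup Γ] [Fintype Γ] [DecidableEq Γ] {S : Finset Γ}

variable (S) in
def cayley (hS0 : (0 : Γ) ∉ S) (hSneg : ∀ s ∈ S, -s ∈ S)
    (hSgen : AddSubgroup.closure (S : Set Γ) = ⊤) : LBSetup Γ where
  d := #S
  dSelf := 0
  Adj u v := decide (v - u ∈ S)
  symm u v h := by simpa using hSneg _ (of_decide_eq_true h)
  loopless u := by simpa using hS0
  regular u := by
    simpa [filter_sub_mem_eq_image] using card_image_of_injective S (add_right_injective u)
  connected u v := by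
    have := reflTransGen_add_of_mem_closure hSneg (hSgen ▸ AddSubgroup.mem_top (v - u)) u
    rw [add_sub_cancel] at this
    simpa using this

variable {hS0 : (0 : Γ) ∉ S} {hSneg : ∀ s ∈ S, -s ∈ S}
  {hSgen : AddSubgroup.closure (S : Set Γ) = ⊤}

theorem cayley_adj {u v : Γ} : (cayley S hS0 hSneg hSgen).Adj u v ↔ v - u ∈ S := by
  simp [cayley]

theorem cayley_nbrs (u : Γ) :
    (cayley S hS0 hSneg hSgen).nbrs u = S.image (u - ·) := by
  ext v
  simp only [nbrs, mem_filter, mem_univ, true_and, cayley_adj, mem_image]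
  constructor
  · exact fun h => ⟨u - v, by simpa using hSneg _ h, sub_sub_cancel u v⟩
  · rintro ⟨s, hs, rfl⟩
    simpa using hSneg _ hs

def cayleyPortEquiv (u : Γ) :
    {v // (cayley S hS0 hSneg hSgen).Adj u v} ≃ {s // s ∈ S} where
  toFun v := ⟨v.1 - u, cayley_adj.1 v.2⟩
  invFun s := ⟨u + s.1, cayley_adj.2 (by simp)⟩
  left_inv v := Subtype.ext (add_sub_cancel u v.1)
  right_inv s := Subtype.ext (add_sub_cancel_left u s.1)

variable (H : AddSubgroup Γ) [DecidablePred (· ∈ H)]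

theorem sum_nbrs_cayley_flow (q : Γ → ℕ) (hq : ∀ s, q s ≠ 0 → s ∈ H) (u : Γ) :
    ∑ v ∈ (cayley S hS0 hSneg hSgen).nbrs u, (if v ∈ H then q (u - v) else 0) =
      if u ∈ H then ∑ s ∈ S, q s else 0 := by
  rw [cayley_nbrs, sum_image fun _ _ _ _ h => sub_right_injective h]
  simp_rw [sub_sub_cancel]
  rw [← sum_const_zero (s := S), ← sum_ite_irrel]
  refine sum_congr rfl fun s _ => ?_
  by_cases hqs : q s = 0
  · simp [hqs]
  · simp [sub_eq_add_neg, H.add_mem_cancel_right (H.neg_mem (hq s hqs))]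

theorem exists_stationary_flow_cayley {d L : ℕ} (p0 : ℕ → ℕ) (p : Fin d → ℕ → ℕ)
    (hsum : ∀ x, p0 x + ∑ i, p i x = x) (hScard : #S = d) (hSH : L ≤ #{s ∈ S | s ∈ H}) :
    ∃ f : Γ → Γ → ℕ,
      (∀ u, ∃ σ : {v // (cayley S hS0 hSneg hSgen).Adj u v} ≃ Fin d,
        ∀ v, f u v.1 = p (σ v) (if u ∈ H then L else 0)) ∧
      (∀ u, (if u ∈ H then L else 0) =
        p0 (if u ∈ H then L else 0) + ∑ v ∈ (cayley S hS0 hSneg hSgen).nbrs u, f v u) := by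
  have hp_zero (i : Fin d) : p i 0 = 0 := by
    have := single_le_sum (fun j _ => Nat.zero_le (p j 0)) (mem_univ i)
    have := hsum 0
    omega
  obtain ⟨σ, hσ⟩ := exists_equiv_apply_eq_zero_of_not (· ∈ H) p (by have := hsum L; omega)
    hScard hSH
  let q (s : Γ) : ℕ := if hs : s ∈ S then p (σ ⟨s, hs⟩) L else 0
  have hq (s : Γ) (hs : q s ≠ 0) : s ∈ H := by
    by_contra hsH
    refine hs ?_
    by_cases hsS : s ∈ S
    · simpa [q, hsS] using hσ ⟨s, hsS⟩ hsH
    · simp [q, hsS]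
  have hq_sum : ∑ s ∈ S, q s = ∑ i, p i L := by
    rw [← sum_attach, ← univ_eq_attach, ← σ.sum_comp (fun i => p i L)]
    exact sum_congr rfl fun s _ => dif_pos s.2
  refine ⟨fun w v => if w ∈ H then q (v - w) else 0, fun u => ⟨(cayleyPortEquiv u).trans σ,
    fun v => ?_⟩, fun u => ?_⟩
  · by_cases hu : u ∈ H
    · simp [hu, q, cayleyPortEquiv, cayley_adj.1 v.2]
    · simp [hu, hp_zero]
  · rw [sum_nbrs_cayley_flow H q hq]
    by_cases hu : u ∈ H
    · simp only [hu, if_true, hq_sum, hsum]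
    · simp only [hu, if_false, add_zero]
      have := hsum 0
      omega

end LBSetup

section Offsets

/-- The offsets `2, 4, …, 2L`, their negatives `n - 2, …, n - 2L`, then `±1`, and finally `n / 2`,
which is its own negative and is only reached when `d` is odd (`L = d / 2 - 1`). -/
def offsetVal (n d i : ℕ) : ℕ :=
  if i < d / 2 - 1 then 2 * (i + 1)
  else if i < 2 * (d / 2 - 1) then n - 2 * (i - (d / 2 - 1) + 1)
  else if i = 2 * (d / 2 - 1) then 1
  else if i = 2 * (d / 2 - 1) + 1 then n - 1
  else n / 2

def offsets (n d : ℕ) [NeZero n] : Finset (Fin n) :=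
  (range d).image fun i => Fin.ofNat n (offsetVal n d i)

variable {n d : ℕ}

theorem offsetVal_pos (hd : 2 ≤ d) (hnd : 2 * d < n) (i : ℕ) : 0 < offsetVal n d i := by
  unfold offsetVal; split_ifs <;> omega

theorem offsetVal_lt (hd : 2 ≤ d) (hnd : 2 * d < n) (i : ℕ) : offsetVal n d i < n := by
  unfold offsetVal; split_ifs <;> omega

theorem offsetVal_injOn (hnd : 2 * d < n) : Set.InjOn (offsetVal n d) (Set.Iio d) := by
  intro i hi j hj h
  simp only [Set.mem_Iio] at hi hj
  unfold offsetVal at h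
  split_ifs at h <;> omega

theorem exists_offsetVal_eq_sub (hd : 2 ≤ d) (hnd : 2 * d < n) (hn : Even n) {i : ℕ}
    (hi : i < d) :
    ∃ j < d, offsetVal n d j = n - offsetVal n d i := by
  obtain ⟨m, rfl⟩ := hn
  unfold offsetVal
  by_cases h1 : i < d / 2 - 1
  · exact ⟨i + (d / 2 - 1), by omega, by split_ifs <;> omega⟩
  by_cases h2 : i < 2 * (d / 2 - 1)
  · exact ⟨i - (d / 2 - 1), by omega, by split_ifs <;> omega⟩
  by_cases h3 : i = 2 * (d / 2 - 1)
  · exact ⟨i + 1, by omega, by split_ifs <;> omega⟩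
  by_cases h4 : i = 2 * (d / 2 - 1) + 1
  · exact ⟨i - 1, by omega, by split_ifs <;> omega⟩
  · exact ⟨i, hi, by split_ifs; omega⟩

variable [NeZero n]

theorem val_ofNat_offsetVal (hd : 2 ≤ d) (hnd : 2 * d < n) (i : ℕ) :
    (Fin.ofNat n (offsetVal n d i)).val = offsetVal n d i := by
  rw [Fin.val_ofNat, Nat.mod_eq_of_lt (offsetVal_lt hd hnd i)]

theorem injOn_ofNat_offsetVal (hd : 2 ≤ d) (hnd : 2 * d < n) :
    Set.InjOn (fun i => Fin.ofNat n (offsetVal n d i)) (Set.Iio d) := fun i hi j hj h =>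
  offsetVal_injOn hnd hi hj <| by
    simpa only [val_ofNat_offsetVal hd hnd] using congrArg Fin.val h

theorem card_offsets (hd : 2 ≤ d) (hnd : 2 * d < n) : #(offsets n d) = d := by
  rw [offsets, card_image_of_injOn, card_range]
  exact (injOn_ofNat_offsetVal hd hnd).mono fun i hi => by simpa using hi

theorem zero_notMem_offsets (hd : 2 ≤ d) (hnd : 2 * d < n) : (0 : Fin n) ∉ offsets n d := by
  simp only [offsets, mem_image, mem_range, not_exists, not_and]
  intro i _ h
  have := val_ofNat_offsetVal hd hnd i
  rw [h, Fin.val_zero] at this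
  exact (offsetVal_pos hd hnd i).ne this

theorem neg_mem_offsets (hd : 2 ≤ d) (hnd : 2 * d < n) (hn : Even n) {s : Fin n}
    (hs : s ∈ offsets n d) : -s ∈ offsets n d := by
  obtain ⟨i, hi, rfl⟩ := mem_image.1 hs
  obtain ⟨j, hj, hji⟩ := exists_offsetVal_eq_sub hd hnd hn (mem_range.1 hi)
  refine mem_image.2 ⟨j, mem_range.2 hj, Fin.ext ?_⟩
  have hne : Fin.ofNat n (offsetVal n d i) ≠ 0 := fun h => zero_notMem_offsets hd hnd (h ▸ hs)
  rw [Fin.val_neg, if_neg hne, val_ofNat_offsetVal hd hnd, val_ofNat_offsetVal hd hnd, hji]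

theorem closure_offsets (hd : 2 ≤ d) (hnd : 2 * d < n) :
    AddSubgroup.closure (offsets n d : Set (Fin n)) = ⊤ := by
  have hone : (1 : Fin n) ∈ offsets n d := by
    refine mem_image.2 ⟨2 * (d / 2 - 1), mem_range.2 (by omega), Fin.ext ?_⟩
    rw [val_ofNat_offsetVal hd hnd, Fin.val_one', Nat.mod_eq_of_lt (by omega)]
    unfold offsetVal
    split_ifs <;> omega
  refine eq_top_iff.2 fun v _ => ?_
  open Fin.NatCast in rw [← Fin.cast_val_eq_self v, ← nsmul_one]
  exact AddSubgroup.nsmul_mem _ (AddSubgroup.subset_closure hone) _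

theorem le_card_filter_even_offsets (hd : 2 ≤ d) (hnd : 2 * d < n) (hn : Even n)
    [DecidablePred (· ∈ AddSubgroup.even (Fin n))] :
    d / 2 - 1 ≤ #{s ∈ offsets n d | s ∈ AddSubgroup.even (Fin n)} := by
  rw [← card_range (d / 2 - 1)]
  refine card_le_card_of_injOn _ (fun i hi => ?_)
    ((injOn_ofNat_offsetVal hd hnd).mono fun i hi => ?_)
  · have hi : i < d / 2 - 1 := mem_range.1 hi
    refine mem_filter.2 ⟨mem_image.2 ⟨i, mem_range.2 (by omega), rfl⟩, ?_⟩
    rw [AddSubgroup.mem_even, Fin.even_iff_of_even hn, val_ofNat_offsetVal hd hnd, offsetVal,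
      if_pos hi]
    exact even_two_mul _
  · simp only [coe_range, Set.mem_Iio] at hi ⊢
    omega

end Offsets

/-- **Theorem 4 (lower bound for stateless algorithms).** Let `d ≥ 4` and let `A` be a
deterministic stateless algorithm given by `g(x) = (p⁰(x), p₁(x), …, p_d(x))` with
`p⁰(x) + Σᵢ pᵢ(x) = x` (a node with load `x` keeps `p⁰(x)` tokens and sends
`p₁(x), …, p_d(x)` along its `d` edges in some order). Then for every even `n > 2d`
there are a `d`-regular graph `G` on `n` vertices (no self-loops), an initial load
distribution and an execution of `A` on `G` — a bijective assignment, at each step and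
node, of the values `p₁(x), …, p_d(x)` to the node's outgoing edges — whose discrepancy
at every time step equals `⌊d/2⌋ − 1`. -/
theorem stateless_lower_bound (d : ℕ) (hd : 4 ≤ d)
    (p0 : ℕ → ℕ) (p : Fin d → ℕ → ℕ)
    (hsum : ∀ x : ℕ, p0 x + ∑ i : Fin d, p i x = x)
    (n : ℕ) (hn : Even n) (hnd : 2 * d < n) :
    ∃ S : LBSetup (Fin n), S.d = d ∧ S.dSelf = 0 ∧
      ∃ (x : ℕ → Fin n → ℕ) (f : ℕ → Fin n → Fin n → ℕ),
        -- at every step, the values `p₁(x_t(u)), …, p_d(x_t(u))` are assigned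
        -- bijectively to the outgoing edges of `u`
        (∀ t, 1 ≤ t → ∀ u : Fin n,
          ∃ σ : {v : Fin n // S.Adj u v} ≃ Fin d,
            ∀ v : {v : Fin n // S.Adj u v}, f t u v.1 = p (σ v) (x t u)) ∧
        -- the node keeps `p⁰(x_t(u))` tokens, and loads evolve accordingly
        (∀ t, 1 ≤ t → ∀ u : Fin n,
          x (t + 1) u = p0 (x t u) + ∑ v ∈ S.nbrs u, f t v u) ∧
        -- the discrepancy at every time step equals `⌊d/2⌋ − 1`
        (∀ t, 1 ≤ t → ∃ lo hi : ℕ,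
          hi - lo = d / 2 - 1 ∧
          (∀ v : Fin n, lo ≤ x t v ∧ x t v ≤ hi) ∧
          (∃ v : Fin n, x t v = lo) ∧ (∃ v : Fin n, x t v = hi)) := by
  classical
  have : NeZero n := ⟨by omega⟩
  have hd2 : 2 ≤ d := by omega
  let H := AddSubgroup.even (Fin n)
  obtain ⟨f, hassign, hflow⟩ := LBSetup.exists_stationary_flow_cayley H p0 p hsum
    (card_offsets hd2 hnd) (le_card_filter_even_offsets hd2 hnd hn)
    (hS0 := zero_notMem_offsets hd2 hnd) (hSneg := fun _ => neg_mem_offsets hd2 hnd hn)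
    (hSgen := closure_offsets hd2 hnd)
  have hodd : (1 : Fin n) ∉ H := by
    rw [AddSubgroup.mem_even, Fin.even_iff_of_even hn, Fin.val_one', Nat.mod_eq_of_lt (by omega)]
    exact Nat.not_even_one
  refine ⟨_, card_offsets hd2 hnd, rfl, fun _ u => if u ∈ H then d / 2 - 1 else 0, fun _ => f,
    fun _ _ => hassign, fun _ _ => hflow, fun _ _ => ⟨0, d / 2 - 1, by omega,
      fun v => by dsimp only; split_ifs <;> omega, ⟨1, if_neg hodd⟩, ⟨0, if_pos H.zero_mem⟩⟩⟩
end

section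
/- Let P be a real symmetric doubly stochastic n×n matrix all of whose eigenvalues lie in the interval [0,1]. Then for every integer a ≥ 0 and every index w, Σ_v |(P^{a+1})_{w,v} − (P^a)_{w,v}| ≤ √n · max_{λ ∈ spec(P)} (λ^a − λ^{a+1}), where spec(P) denotes the (real) spectrum of P. -/
open Finset

/-- **Lemma (successive powers of a PSD doubly stochastic matrix).** Let `P` be a real
symmetric doubly stochastic `n×n` matrix all of whose eigenvalues lie in `[0,1]`. Then
for every `a ≥ 0` and every index `w`,
`Σ_v |(P^{a+1})_{w,v} − (P^a)_{w,v}| ≤ √n · max_{λ ∈ spec(P)} (λ^a − λ^{a+1})`. -/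
theorem successive_powers_l1_bound {n : ℕ}
    (P : Matrix (Fin n) (Fin n) ℝ)
    (hsymm : P.IsSymm)
    (hnonneg : ∀ i j, 0 ≤ P i j)
    (hrow : ∀ i, ∑ j, P i j = 1)
    (hcol : ∀ j, ∑ i, P i j = 1)
    (hspec : ∀ lam ∈ spectrum ℝ P, 0 ≤ lam ∧ lam ≤ 1)
    (a : ℕ) (w : Fin n) :
    ∑ v, |(P ^ (a + 1)) w v - (P ^ a) w v| ≤
      Real.sqrt n *
        sSup ((fun lam : ℝ => lam ^ a - lam ^ (a + 1)) '' spectrum ℝ P) := by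
  classical
  rcases Nat.eq_zero_or_pos n with hn | hn
  · subst hn
    simp [Finset.sum_of_isEmpty]
  have hherm : P.IsHermitian := hsymm
  set μ : Fin n → ℝ := hherm.eigenvalues with hμ
  set U : Matrix (Fin n) (Fin n) ℝ := (hherm.eigenvectorUnitary : Matrix (Fin n) (Fin n) ℝ)
    with hU
  have hUstar : U * star U = 1 := Matrix.mem_unitaryGroup_iff.mp hherm.eigenvectorUnitary.2
  have hstarU : star U * U = 1 := Matrix.mem_unitaryGroup_iff'.mp hherm.eigenvectorUnitary.2
  have hPdiag : P = U * Matrix.diagonal μ * star U := by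
    have := hherm.spectral_theorem
    simpa [RCLike.ofReal_real_eq_id] using this
  -- powers
  have hpow : ∀ k : ℕ, P ^ k = U * Matrix.diagonal (fun i => μ i ^ k) * star U := by
    intro k
    induction k with
    | zero => simp [Matrix.diagonal_one, hUstar]
    | succ k ih =>
        rw [pow_succ, ih, hPdiag]
        simp only [Matrix.mul_assoc]
        rw [← Matrix.mul_assoc (star U) U, hstarU, Matrix.one_mul,
          ← Matrix.mul_assoc (Matrix.diagonal fun i => μ i ^ k) (Matrix.diagonal μ),
          Matrix.diagonal_mul_diagonal]
        simp [pow_succ]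
  -- the difference matrix
  set d : Fin n → ℝ := fun i => μ i ^ a - μ i ^ (a + 1) with hd
  have hM : P ^ (a+1) - P ^ a = U * Matrix.diagonal (fun i => - d i) * star U := by
    rw [hpow (a+1), hpow a]
    rw [show (Matrix.diagonal fun i => - d i) =
        Matrix.diagonal (fun i => μ i ^ (a+1)) - Matrix.diagonal (fun i => μ i ^ a) by
      rw [Matrix.diagonal_sub]; congr 1; funext i; simp [hd]]
    rw [Matrix.mul_sub, Matrix.sub_mul]
  -- entries
  have hentry : ∀ v, (P ^ (a+1) - P ^ a) w v = ∑ i, U w i * (- d i) * U v i := by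
    intro v
    rw [hM, Matrix.mul_apply]
    congr 1; funext i
    rw [Matrix.mul_diagonal]
    simp [Matrix.star_apply, mul_assoc]
  -- spectrum facts
  have hmem : ∀ i, μ i ∈ spectrum ℝ P := fun i => hherm.eigenvalues_mem_spectrum_real i
  have hμ01 : ∀ i, 0 ≤ μ i ∧ μ i ≤ 1 := fun i => hspec _ (hmem i)
  have hd0 : ∀ i, 0 ≤ d i := by
    intro i
    have := pow_le_pow_of_le_one (hμ01 i).1 (hμ01 i).2 (Nat.le_succ a)
    simpa [hd] using sub_nonneg.mpr this
  set c : ℝ := sSup ((fun lam : ℝ => lam ^ a - lam ^ (a + 1)) '' spectrum ℝ P) with hc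
  have hbdd : BddAbove ((fun lam : ℝ => lam ^ a - lam ^ (a + 1)) '' spectrum ℝ P) := by
    refine ⟨1, ?_⟩
    rintro x ⟨lam, hlam, rfl⟩
    have h1 := hspec lam hlam
    have : lam ^ a ≤ 1 := pow_le_one₀ h1.1 h1.2
    have h2 : 0 ≤ lam ^ (a+1) := pow_nonneg h1.1 _
    simp only
    linarith
  have hdc : ∀ i, d i ≤ c := fun i => le_csSup hbdd ⟨μ i, hmem i, rfl⟩
  have hc0 : 0 ≤ c := le_trans (hd0 ⟨0, hn⟩) (hdc ⟨0, hn⟩)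
  -- orthonormality of columns of U (as rows of star U): ∑ v, U v i * U v j = δ ij
  have hortho : ∀ i j, ∑ v, U v i * U v j = if i = j then (1:ℝ) else 0 := by
    intro i j
    have : (star U * U) i j = (1 : Matrix (Fin n) (Fin n) ℝ) i j := by rw [hstarU]
    rw [Matrix.mul_apply] at this
    simpa [Matrix.star_apply, Matrix.one_apply, mul_comm] using this
  have hrowU : ∑ i, U w i ^ 2 = 1 := by
    have : (U * star U) w w = (1 : Matrix (Fin n) (Fin n) ℝ) w w := by rw [hUstar]
    rw [Matrix.mul_apply] at this
    simpa [Matrix.star_apply, Matrix.one_apply, sq] using this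
  -- sum of squares
  have hsq : ∑ v, ((P ^ (a+1) - P ^ a) w v) ^ 2 ≤ c ^ 2 := by
    have key : ∑ v, ((P ^ (a+1) - P ^ a) w v) ^ 2 = ∑ i, d i ^ 2 * U w i ^ 2 := by
      calc ∑ v, ((P ^ (a+1) - P ^ a) w v) ^ 2
          = ∑ v, (∑ i, U w i * (- d i) * U v i) * (∑ j, U w j * (- d j) * U v j) := by
            simp_rw [hentry, sq]
        _ = ∑ i, ∑ j, (U w i * (- d i)) * (U w j * (- d j)) *
              (∑ v, U v i * U v j) := by
            simp_rw [Finset.sum_mul_sum, Finset.mul_sum]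
            rw [Finset.sum_comm]
            congr 1; funext i
            rw [Finset.sum_comm]
            congr 1; funext j
            congr 1; funext v
            ring
        _ = ∑ i, d i ^ 2 * U w i ^ 2 := by
            simp_rw [hortho, mul_ite, mul_one, mul_zero]
            congr 1; funext i
            rw [Finset.sum_ite_eq univ i (fun x => U w i * -d i * (U w x * -d x))]
            simp only [Finset.mem_univ, if_true]
            ring
    rw [key]
    calc ∑ i, d i ^ 2 * U w i ^ 2 ≤ ∑ i, c ^ 2 * U w i ^ 2 := by
          apply Finset.sum_le_sum
          intro i _
          exact mul_le_mul_of_nonneg_right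
            (pow_le_pow_left₀ (hd0 i) (hdc i) 2) (sq_nonneg _)
      _ = c ^ 2 := by rw [← Finset.mul_sum, hrowU, mul_one]
  -- Cauchy-Schwarz
  have hL1 : (∑ v, |(P ^ (a+1)) w v - (P ^ a) w v|) ^ 2 ≤ (n : ℝ) * c ^ 2 := by
    calc (∑ v, |(P ^ (a+1)) w v - (P ^ a) w v|) ^ 2
        ≤ (Finset.univ.card : ℝ) * ∑ v, |(P ^ (a+1)) w v - (P ^ a) w v| ^ 2 :=
          sq_sum_le_card_mul_sum_sq
      _ = (n : ℝ) * ∑ v, ((P ^ (a+1) - P ^ a) w v) ^ 2 := by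
          simp [sq_abs, Matrix.sub_apply]
      _ ≤ (n : ℝ) * c ^ 2 := by
          exact mul_le_mul_of_nonneg_left hsq (Nat.cast_nonneg n)
  have hS0 : 0 ≤ ∑ v, |(P ^ (a+1)) w v - (P ^ a) w v| :=
    Finset.sum_nonneg fun v _ => abs_nonneg _
  have := Real.sqrt_le_sqrt hL1
  rw [Real.sqrt_sq hS0] at this
  calc ∑ v, |(P ^ (a+1)) w v - (P ^ a) w v| ≤ Real.sqrt ((n : ℝ) * c ^ 2) := this
    _ = Real.sqrt n * c := by
        rw [Real.sqrt_mul (Nat.cast_nonneg n), Real.sqrt_sq hc0]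
end
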